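/- arXiv:1503.01854 — 10 statements merged into one kernel-verified Lean document; each statement's English description precedes it below -/
import Mathlib

section
/- Let n ≥ 1 and let w : ℝⁿ → ℝ be a function. Then w is a choice welfare function (monotone, translation invariant, and convex) if and only if there exists a convex function V : ℝⁿ → ℝ ∪ {+∞}, not identically +∞ on the simplex Δ_{n−1}, such that w(μ) = sup_{x ∈ Δ_{n−1}} { μᵀx − V(x) } for all μ ∈ ℝⁿ; moreover V can be taken to be the convex conjugate V(x) = sup_{y ∈ ℝⁿ} { yᵀx − w(y) }, in which case the supremum over the simplex is attained. -/
open scoped BigOperators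
open MeasureTheory

noncomputable section

/-- The simplex Δ_{n-1} in ℝⁿ. -/
def choiceSimplex (n : ℕ) : Set (Fin n → ℝ) :=
  {x | (∀ i, 0 ≤ x i) ∧ ∑ i, x i = 1}

/-- A choice welfare function: monotone, translation invariant, convex. -/
def IsCWF {n : ℕ} (w : (Fin n → ℝ) → ℝ) : Prop :=
  (∀ μ₁ μ₂ : Fin n → ℝ, μ₂ ≤ μ₁ → w μ₂ ≤ w μ₁) ∧
  (∀ (μ : Fin n → ℝ) (t : ℝ), w (μ + fun _ => t) = w μ + t) ∧
  ConvexOn ℝ Set.univ w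

/-- Convexity for an (ℝ ∪ {+∞})-valued function on ℝⁿ. -/
def ConvexE {n : ℕ} (V : (Fin n → ℝ) → EReal) : Prop :=
  ∀ x y : Fin n → ℝ, ∀ a b : ℝ, 0 ≤ a → 0 ≤ b → a + b = 1 →
    V (a • x + b • y) ≤ (a : EReal) * V x + (b : EReal) * V y

/-- The convex conjugate V(x) = sup_y { yᵀx − w(y) }, valued in ℝ ∪ {+∞}. -/
def conjFn {n : ℕ} (w : (Fin n → ℝ) → ℝ) (x : Fin n → ℝ) : EReal :=
  ⨆ y : Fin n → ℝ, ((∑ i, y i * x i - w y : ℝ) : EReal)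

/-! Monotonicity and translation invariance make `w` 1-Lipschitz for the sup norm, so its open
strict epigraph can be separated from `(μ, w μ)` by a hyperplane, which yields a subgradient `x`
of `w` at `μ`. Testing the subgradient inequality against `μ - eᵢ` and `μ ± 1` shows `x ∈ Δ`,
and the inequality says precisely that `conjFn w x = μ ⬝ᵥ x - w μ`; with the Fenchel–Young
inequality this gives the representation, with the supremum attained at `x`. Conversely, each
`μ ↦ μ ⬝ᵥ x - V x` with `x ∈ Δ` is monotone, translation equivariant and affine, and these
properties pass to the supremum. -/

open Set

section Subgradient

variable {E : Type*} [TopologicalSpace E] [AddCommGroup E] [IsTopologicalAddGroup E]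
  [Module ℝ E] [ContinuousSMul ℝ E]

theorem ConvexOn.exists_subgradient_of_continuous {f : E → ℝ} (hf : ConvexOn ℝ univ f)
    (hc : Continuous f) (x : E) : ∃ g : StrongDual ℝ E, ∀ y, f x + g (y - x) ≤ f y := by
  have hconv : Convex ℝ {p : E × ℝ | f p.1 < p.2} := by
    simpa only [mem_univ, true_and] using hf.convex_strict_epigraph
  have hopen : IsOpen {p : E × ℝ | f p.1 < p.2} := isOpen_lt (hc.comp continuous_fst) continuous_snd
  obtain ⟨F, hF⟩ := geometric_hahn_banach_open_point hconv hopen (x := (x, f x)) (lt_irrefl (f x))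
  set c := F (0, 1)
  have hF_apply (y : E) (t : ℝ) : F (y, t) = F (y, 0) + t * c := by
    rw [← smul_eq_mul, ← map_smul, ← map_add, Prod.smul_mk, Prod.mk_add_mk, smul_zero, smul_eq_mul,
      mul_one, add_zero, zero_add]
  have hc : c < 0 := by
    have := hF (x, f x + 1) (show f x < f x + 1 from lt_add_one _)
    rw [hF_apply x (f x + 1), hF_apply x (f x)] at this
    linarith
  refine ⟨(-c)⁻¹ • F.comp (ContinuousLinearMap.inl ℝ E ℝ), fun y => ?_⟩
  refine le_of_forall_gt_imp_ge_of_dense fun t ht => ?_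
  have := hF (y, t) ht
  rw [hF_apply y t, hF_apply x (f x)] at this
  have : F (y - x, 0) < (t - f x) * -c := by
    rw [← sub_zero (0 : ℝ), ← Prod.mk_sub_mk, map_sub]
    linarith
  change f x + (-c)⁻¹ * F (y - x, 0) ≤ t
  rw [inv_mul_eq_div]
  linarith [(div_lt_iff₀ (neg_pos.2 hc)).2 this]

end Subgradient

lemma LinearMap.apply_eq_dotProduct_single {R ι : Type*} [CommSemiring R] [Fintype ι]
    [DecidableEq ι] (f : (ι → R) →ₗ[R] R) (y : ι → R) :
    f y = y ⬝ᵥ fun i => f (Pi.single i 1) := by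
  conv_lhs => rw [← Finset.univ_sum_single y]
  refine (map_sum f _ _).trans (Finset.sum_congr rfl fun i _ => ?_)
  rw [← smul_eq_mul, ← map_smul, ← Pi.single_smul, smul_eq_mul, mul_one]

lemma const_dotProduct {ι : Type*} [Fintype ι] (t : ℝ) (x : ι → ℝ) :
    (fun _ => t) ⬝ᵥ x = t * ∑ i, x i := by
  simp only [dotProduct, Finset.mul_sum]

lemma dotProduct_add_const_of_mem_choiceSimplex {n : ℕ} {x : Fin n → ℝ}
    (hx : x ∈ choiceSimplex n) (μ : Fin n → ℝ) (t : ℝ) : (μ + fun _ => t) ⬝ᵥ x = μ ⬝ᵥ x + t := by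
  rw [add_dotProduct, const_dotProduct, hx.2, mul_one]

lemma EReal.coe_sub_le_coe_iff {a r : ℝ} {v : EReal} (hv : v ≠ ⊥) :
    (a : EReal) - v ≤ r ↔ (v ≠ ⊤ → a - v.toReal ≤ r) := by
  induction v with
  | bot => exact absurd rfl hv
  | coe v => simp [← EReal.coe_sub]
  | top => simp

section Conjugate

variable {n : ℕ} (w : (Fin n → ℝ) → ℝ)

lemma le_conjFn (x y : Fin n → ℝ) : ((y ⬝ᵥ x - w y : ℝ) : EReal) ≤ conjFn w x :=
  le_iSup (fun y => ((y ⬝ᵥ x - w y : ℝ) : EReal)) y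

lemma conjFn_ne_bot (x : Fin n → ℝ) : conjFn w x ≠ ⊥ :=
  ne_bot_of_le_ne_bot (EReal.coe_ne_bot _) (le_conjFn w x 0)

lemma convexE_conjFn : ConvexE (conjFn w) := by
  intro x y a b ha hb hab
  refine iSup_le fun z => ?_
  have hz : z ⬝ᵥ (a • x + b • y) - w z = a * (z ⬝ᵥ x - w z) + b * (z ⬝ᵥ y - w z) := by
    rw [dotProduct_add, dotProduct_smul, dotProduct_smul, smul_eq_mul, smul_eq_mul]
    linear_combination w z * hab
  calc ((z ⬝ᵥ (a • x + b • y) - w z : ℝ) : EReal)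
      = (a : EReal) * ((z ⬝ᵥ x - w z : ℝ) : EReal)
        + (b : EReal) * ((z ⬝ᵥ y - w z : ℝ) : EReal) := by
        rw [hz, EReal.coe_add, EReal.coe_mul, EReal.coe_mul]
    _ ≤ (a : EReal) * conjFn w x + (b : EReal) * conjFn w y :=
        add_le_add (mul_le_mul_of_nonneg_left (le_conjFn w x z) (EReal.coe_nonneg.2 ha))
          (mul_le_mul_of_nonneg_left (le_conjFn w y z) (EReal.coe_nonneg.2 hb))

end Conjugate

namespace IsCWF

variable {n : ℕ} {w : (Fin n → ℝ) → ℝ}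

theorem lipschitzWith (hw : IsCWF w) : LipschitzWith 1 w := by
  refine LipschitzWith.of_le_add fun a b => ?_
  have hab : a ≤ b + fun _ => dist a b := fun i => by
    have h := Real.dist_eq (a i) (b i) ▸ dist_le_pi_dist a b i
    simp only [Pi.add_apply]
    linarith [le_abs_self (a i - b i)]
  exact (hw.1 _ _ hab).trans_eq (hw.2.1 b _)

theorem mem_choiceSimplex_of_subgradient (hw : IsCWF w) {μ x : Fin n → ℝ}
    (hx : ∀ y, y ⬝ᵥ x - w y ≤ μ ⬝ᵥ x - w μ) : x ∈ choiceSimplex n := by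
  classical
  refine ⟨fun i => ?_, ?_⟩
  · have hle : μ - Pi.single i 1 ≤ μ := sub_le_self _ (Pi.single_nonneg.2 zero_le_one)
    have := hx (μ - Pi.single i 1)
    rw [sub_dotProduct, single_dotProduct, one_mul] at this
    linarith [hw.1 _ _ hle]
  · have h := fun t => hx (μ + fun _ => t)
    simp only [add_dotProduct, const_dotProduct, hw.2.1] at h
    linarith [h 1, h (-1)]

theorem exists_subgradient_mem_choiceSimplex (hw : IsCWF w) (μ : Fin n → ℝ) :
    ∃ x ∈ choiceSimplex n, ∀ y, y ⬝ᵥ x - w y ≤ μ ⬝ᵥ x - w μ := by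
  obtain ⟨g, hg⟩ := hw.2.2.exists_subgradient_of_continuous hw.lipschitzWith.continuous μ
  set x : Fin n → ℝ := fun i => g (Pi.single i 1)
  have hgx : ∀ y, g y = y ⬝ᵥ x := (g : (Fin n → ℝ) →ₗ[ℝ] ℝ).apply_eq_dotProduct_single
  have hx : ∀ y, y ⬝ᵥ x - w y ≤ μ ⬝ᵥ x - w μ := fun y => by
    have := hg y
    rw [hgx, sub_dotProduct] at this
    linarith
  exact ⟨x, hw.mem_choiceSimplex_of_subgradient hx, hx⟩

theorem exists_eq_sub_conjFn (hw : IsCWF w) (μ : Fin n → ℝ) :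
    ∃ x ∈ choiceSimplex n, (w μ : EReal) = ((μ ⬝ᵥ x : ℝ) : EReal) - conjFn w x := by
  obtain ⟨x, hx, hmax⟩ := hw.exists_subgradient_mem_choiceSimplex μ
  have hconj : conjFn w x = ((μ ⬝ᵥ x - w μ : ℝ) : EReal) :=
    le_antisymm (iSup_le fun y => EReal.coe_le_coe (hmax y)) (le_conjFn w x μ)
  exact ⟨x, hx, by rw [hconj, ← EReal.coe_sub, sub_sub_cancel]⟩

theorem eq_iSup_conjFn (hw : IsCWF w) (μ : Fin n → ℝ) :
    (w μ : EReal) = ⨆ x ∈ choiceSimplex n, ((μ ⬝ᵥ x : ℝ) : EReal) - conjFn w x := by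
  obtain ⟨x, hx, heq⟩ := hw.exists_eq_sub_conjFn μ
  refine le_antisymm (le_iSup₂_of_le x hx heq.le) (iSup₂_le fun z _ => ?_)
  calc ((μ ⬝ᵥ z : ℝ) : EReal) - conjFn w z
      ≤ ((μ ⬝ᵥ z : ℝ) : EReal) - ((μ ⬝ᵥ z - w μ : ℝ) : EReal) :=
        EReal.sub_le_sub le_rfl (le_conjFn w z μ)
    _ = w μ := by rw [← EReal.coe_sub, sub_sub_cancel]

theorem exists_conjFn_ne_top (hw : IsCWF w) : ∃ x ∈ choiceSimplex n, conjFn w x ≠ ⊤ := by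
  obtain ⟨x, hx, heq⟩ := hw.exists_eq_sub_conjFn 0
  exact ⟨x, hx, fun htop => by simp [htop] at heq⟩

end IsCWF

section Converse

variable {n : ℕ} {w : (Fin n → ℝ) → ℝ}

theorem isCWF_of_forall_le_iff (S : Set (Fin n → ℝ)) (hS : S ⊆ choiceSimplex n)
    (v : (Fin n → ℝ) → ℝ) (hw : ∀ μ r, w μ ≤ r ↔ ∀ x ∈ S, μ ⬝ᵥ x - v x ≤ r) : IsCWF w := by
  have le_w : ∀ μ, ∀ x ∈ S, μ ⬝ᵥ x - v x ≤ w μ := fun μ => (hw μ (w μ)).1 le_rfl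
  have translate_le : ∀ μ t, w (μ + fun _ => t) ≤ w μ + t := fun μ t =>
    (hw _ _).2 fun x hx => by
      rw [dotProduct_add_const_of_mem_choiceSimplex (hS hx)]
      linarith [le_w μ x hx]
  refine ⟨fun μ₁ μ₂ h => (hw _ _).2 fun x hx => ?_, fun μ t => ?_, convex_univ, ?_⟩
  · linarith [le_w μ₁ x hx, dotProduct_le_dotProduct_of_nonneg_right h (hS hx).1]
  · refine le_antisymm (translate_le μ t) ?_
    have hμ : (μ + fun _ => t) + (fun _ => -t) = μ := by ext; simp
    linarith [hμ ▸ translate_le (μ + fun _ => t) (-t)]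
  · intro μ₁ _ μ₂ _ a b ha hb hab
    refine (hw _ _).2 fun x hx => ?_
    have hsplit : (a • μ₁ + b • μ₂) ⬝ᵥ x - v x = a * (μ₁ ⬝ᵥ x - v x) + b * (μ₂ ⬝ᵥ x - v x) := by
      rw [add_dotProduct, smul_dotProduct, smul_dotProduct, smul_eq_mul, smul_eq_mul]
      linear_combination v x * hab
    rw [hsplit, smul_eq_mul, smul_eq_mul]
    exact add_le_add (mul_le_mul_of_nonneg_left (le_w μ₁ x hx) ha)
      (mul_le_mul_of_nonneg_left (le_w μ₂ x hx) hb)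

theorem isCWF_of_eq_iSup_sub {V : (Fin n → ℝ) → EReal} (hV : ∀ x, V x ≠ ⊥)
    (hw : ∀ μ, (w μ : EReal) = ⨆ x ∈ choiceSimplex n, ((μ ⬝ᵥ x : ℝ) : EReal) - V x) :
    IsCWF w := by
  refine isCWF_of_forall_le_iff {x | x ∈ choiceSimplex n ∧ V x ≠ ⊤} (fun x hx => hx.1)
    (fun x => (V x).toReal) fun μ r => ?_
  rw [← EReal.coe_le_coe_iff, hw, iSup₂_le_iff]
  simp only [EReal.coe_sub_le_coe_iff (hV _), mem_ofPred_eq, and_imp]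

end Converse

theorem stmt_0_general (n : ℕ) (w : (Fin n → ℝ) → ℝ) :
    (IsCWF w ↔
      ∃ V : (Fin n → ℝ) → EReal,
        ConvexE V ∧ (∀ x, V x ≠ ⊥) ∧ (∃ x ∈ choiceSimplex n, V x ≠ ⊤) ∧
        ∀ μ : Fin n → ℝ,
          (w μ : EReal) = ⨆ x ∈ choiceSimplex n, ((∑ i, μ i * x i : ℝ) : EReal) - V x) ∧
    (IsCWF w →
      ConvexE (conjFn w) ∧ (∀ x, conjFn w x ≠ ⊥) ∧
      (∃ x ∈ choiceSimplex n, conjFn w x ≠ ⊤) ∧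
      (∀ μ : Fin n → ℝ,
        (w μ : EReal) = ⨆ x ∈ choiceSimplex n, ((∑ i, μ i * x i : ℝ) : EReal) - conjFn w x) ∧
      (∀ μ : Fin n → ℝ, ∃ x ∈ choiceSimplex n,
        (w μ : EReal) = ((∑ i, μ i * x i : ℝ) : EReal) - conjFn w x)) := by
  refine ⟨⟨fun hw => ⟨conjFn w, convexE_conjFn w, conjFn_ne_bot w, hw.exists_conjFn_ne_top,
    hw.eq_iSup_conjFn⟩, fun ⟨V, _, hV, _, hrep⟩ => isCWF_of_eq_iSup_sub hV hrep⟩, fun hw => ?_⟩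
  exact ⟨convexE_conjFn w, conjFn_ne_bot w, hw.exists_conjFn_ne_top, hw.eq_iSup_conjFn,
    hw.exists_eq_sub_conjFn⟩

theorem stmt_0 (n : ℕ) (hn : 1 ≤ n) (w : (Fin n → ℝ) → ℝ) :
    (IsCWF w ↔
      ∃ V : (Fin n → ℝ) → EReal,
        ConvexE V ∧ (∀ x, V x ≠ ⊥) ∧ (∃ x ∈ choiceSimplex n, V x ≠ ⊤) ∧
        ∀ μ : Fin n → ℝ,
          (w μ : EReal) = ⨆ x ∈ choiceSimplex n, ((∑ i, μ i * x i : ℝ) : EReal) - V x) ∧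
    (IsCWF w →
      ConvexE (conjFn w) ∧ (∀ x, conjFn w x ≠ ⊥) ∧
      (∃ x ∈ choiceSimplex n, conjFn w x ≠ ⊤) ∧
      (∀ μ : Fin n → ℝ,
        (w μ : EReal) = ⨆ x ∈ choiceSimplex n, ((∑ i, μ i * x i : ℝ) : EReal) - conjFn w x) ∧
      (∀ μ : Fin n → ℝ, ∃ x ∈ choiceSimplex n,
        (w μ : EReal) = ((∑ i, μ i * x i : ℝ) : EReal) - conjFn w x)) :=
  stmt_0_general n w
end
end

section
/- Let w : ℝⁿ → ℝ be a differentiable choice welfare function (monotone, translation invariant, convex) that is superlinear, i.e., there exist b₁,…,bₙ with w(μ) ≥ μ_i + b_i for all i and all μ. Then there exists a set Θ of finitely supported Borel probability measures on ℝⁿ (each supported on at most n points) such that w(μ) = sup_{θ ∈ Θ} E_θ[max_{i ∈ {1,…,n}} (μ_i + ε_i)] for all μ ∈ ℝⁿ. -/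
open scoped BigOperators ENNReal
open MeasureTheory

noncomputable section

namespace Stmt2Aux

variable {n : ℕ}

lemma hasDerivAt_line (w : (Fin n → ℝ) → ℝ) (hdiff : Differentiable ℝ w)
    (ν d : Fin n → ℝ) (t : ℝ) :
    HasDerivAt (fun s : ℝ => w (ν + s • d)) (fderiv ℝ w (ν + t • d) d) t := by
  have hc : HasDerivAt (fun s : ℝ => ν + s • d) d t := by
    simpa using ((hasDerivAt_id t).smul_const d).const_add ν
  exact (hdiff (ν + t • d)).hasFDerivAt.comp_hasDerivAt t hc

lemma convexOn_line {w : (Fin n → ℝ) → ℝ} (hw : IsCWF w) (ν d : Fin n → ℝ) :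
    ConvexOn ℝ Set.univ (fun s : ℝ => w (ν + s • d)) := by
  have := hw.2.2.comp_affineMap (AffineMap.lineMap ν (ν + d))
  have he : (fun s : ℝ => w (ν + s • d)) = w ∘ (AffineMap.lineMap ν (ν + d)) := by
    funext s; simp [AffineMap.lineMap_apply]; ring_nf
  rw [he]; simpa using this

/-- gradient coordinates -/
def grad (w : (Fin n → ℝ) → ℝ) (ν : Fin n → ℝ) (i : Fin n) : ℝ :=
  fderiv ℝ w ν (Pi.single i 1)

lemma grad_nonneg {w : (Fin n → ℝ) → ℝ} (hw : IsCWF w) (hdiff : Differentiable ℝ w)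
    (ν : Fin n → ℝ) (i : Fin n) : 0 ≤ grad w ν i := by
  set d : Fin n → ℝ := Pi.single i 1 with hd
  have hD : HasDerivAt (fun s : ℝ => w (ν + s • d)) (grad w ν i) 0 := by
    have := hasDerivAt_line w hdiff ν d 0
    simpa [grad] using this
  have hconv := convexOn_line hw ν d
  have hslope := hconv.slope_le_of_hasDerivAt (Set.mem_univ (-1)) (Set.mem_univ 0)
    (by norm_num) hD
  refine le_trans ?_ hslope
  rw [slope_def_field]
  have hmono : w (ν + (-1 : ℝ) • d) ≤ w (ν + (0:ℝ) • d) := by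
    apply hw.1
    intro j
    simp only [Pi.add_apply, Pi.smul_apply, smul_eq_mul, hd]
    rcases eq_or_ne j i with rfl | hne
    · simp
    · simp [Pi.single_apply, hne]
  have : 0 ≤ w (ν + (0:ℝ) • d) - w (ν + (-1:ℝ) • d) := by linarith
  calc (0:ℝ) ≤ (w (ν + (0:ℝ) • d) - w (ν + (-1:ℝ) • d)) / (0 - (-1)) := by
        rw [show (0:ℝ) - (-1) = 1 by norm_num, div_one]; linarith
    _ = _ := by norm_num

lemma grad_sum {w : (Fin n → ℝ) → ℝ} (hw : IsCWF w) (hdiff : Differentiable ℝ w)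
    (ν : Fin n → ℝ) : ∑ i, grad w ν i = 1 := by
  have e1 : ∑ i, grad w ν i = fderiv ℝ w ν (fun _ => (1:ℝ)) := by
    have : (fun _ => (1:ℝ)) = ∑ i : Fin n, (Pi.single i (1:ℝ) : Fin n → ℝ) := by
      exact (Finset.univ_sum_single (fun _ => (1:ℝ))).symm
    rw [this, map_sum]
    rfl
  have hD : HasDerivAt (fun s : ℝ => w (ν + s • (fun _ => (1:ℝ)))) (fderiv ℝ w ν (fun _ => (1:ℝ))) 0 := by
    simpa using hasDerivAt_line w hdiff ν (fun _ => (1:ℝ)) 0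
  have he : (fun s : ℝ => w (ν + s • (fun _ => (1:ℝ)))) = (fun s : ℝ => w ν + s) := by
    funext s
    have : ν + s • (fun _ => (1:ℝ)) = ν + fun _ => s := by
      funext j; simp
    rw [this, hw.2.1]
  rw [he] at hD
  have hD' : HasDerivAt (fun s : ℝ => w ν + s) (1:ℝ) 0 := by
    simpa using (hasDerivAt_id (0:ℝ)).const_add (w ν)
  have := hD.unique hD'
  rw [e1, this]

lemma grad_support {w : (Fin n → ℝ) → ℝ} (hw : IsCWF w) (hdiff : Differentiable ℝ w)
    (ν μ : Fin n → ℝ) : w ν + ∑ i, grad w ν i * (μ i - ν i) ≤ w μ := by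
  set d : Fin n → ℝ := μ - ν with hd
  have hD : HasDerivAt (fun s : ℝ => w (ν + s • d)) (fderiv ℝ w ν d) 0 := by
    simpa using hasDerivAt_line w hdiff ν d 0
  have hconv := convexOn_line hw ν d
  have hslope := hconv.le_slope_of_hasDerivAt (Set.mem_univ (0:ℝ)) (Set.mem_univ 1)
    one_pos hD
  rw [slope_def_field] at hslope
  have h01 : ν + (1:ℝ) • d = μ := by funext j; simp [hd]
  have h00 : ν + (0:ℝ) • d = ν := by funext j; simp
  rw [h01, h00] at hslope
  simp only [sub_zero, div_one] at hslope
  have hfd : fderiv ℝ w ν d = ∑ i, grad w ν i * (μ i - ν i) := by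
    have hdsum : d = ∑ i, (μ i - ν i) • (Pi.single i (1:ℝ) : Fin n → ℝ) := by
      have : d = ∑ i, Pi.single i (d i) := (Finset.univ_sum_single d).symm
      rw [this]
      congr 1; funext i
      rw [← Pi.single_smul]
      simp [hd]
    rw [hdsum, map_sum]
    congr 1; funext i
    rw [_root_.map_smul]
    simp [grad, mul_comm]
  rw [hfd] at hslope
  linarith

/-- the atoms of the representing measures -/
def atomv (w : (Fin n → ℝ) → ℝ) (b ν : Fin n → ℝ) (K : ℝ) (i : Fin n) : Fin n → ℝ :=
  fun j => if j = i then w ν - ν i else b j - K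

/-- the representing measure -/
def cwfM (w : (Fin n → ℝ) → ℝ) (b ν : Fin n → ℝ) (K : Fin n → ℝ) (x : Fin n → ℝ) :
    Measure (Fin n → ℝ) :=
  ∑ i : Fin n, ENNReal.ofReal (x i) • Measure.dirac (atomv w b ν (K i) i)

lemma measurable_supf (μ : Fin n → ℝ) :
    Measurable (fun ε : Fin n → ℝ => ⨆ i, μ i + ε i) := by
  apply Measurable.iSup
  intro i
  exact measurable_const.add (measurable_pi_apply i)

lemma integrable_supf (μ : Fin n → ℝ) (c : ℝ≥0∞) (hc : c ≠ ⊤) (a : Fin n → ℝ) :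
    Integrable (fun ε : Fin n → ℝ => ⨆ i, μ i + ε i) (c • Measure.dirac a) := by
  refine Integrable.smul_measure ?_ hc
  refine ⟨(measurable_supf μ).aestronglyMeasurable, ?_⟩
  rw [hasFiniteIntegral_def, lintegral_dirac]
  exact ENNReal.coe_lt_top

lemma cwfM_integral (w : (Fin n → ℝ) → ℝ) (b ν : Fin n → ℝ) (K : Fin n → ℝ)
    (x : Fin n → ℝ) (hx : ∀ i, 0 ≤ x i) (μ : Fin n → ℝ) :
    ∫ ε, (⨆ i, μ i + ε i) ∂(cwfM w b ν K x) =
      ∑ i, x i * (⨆ j, μ j + atomv w b ν (K i) i j) := by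
  rw [cwfM, integral_finset_sum_measure (fun i _ => integrable_supf μ _ ENNReal.ofReal_ne_top _)]
  congr 1
  funext i
  rw [integral_smul_measure, integral_dirac, ENNReal.toReal_ofReal (hx i), smul_eq_mul]

lemma cwfM_prob (w : (Fin n → ℝ) → ℝ) (b ν : Fin n → ℝ) (K : Fin n → ℝ)
    (x : Fin n → ℝ) (hx : ∀ i, 0 ≤ x i) (hs : ∑ i, x i = 1) :
    IsProbabilityMeasure (cwfM w b ν K x) := by
  constructor
  rw [cwfM, Measure.finset_sum_apply]
  have : ∀ i ∈ Finset.univ, (ENNReal.ofReal (x i) • Measure.dirac (atomv w b ν (K i) i))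
      Set.univ = ENNReal.ofReal (x i) := by
    intro i _
    simp [Measure.smul_apply]
  rw [Finset.sum_congr rfl this, ← ENNReal.ofReal_sum_of_nonneg (fun i _ => hx i), hs,
    ENNReal.ofReal_one]

lemma cwfM_support (w : (Fin n → ℝ) → ℝ) (b ν : Fin n → ℝ) (K : Fin n → ℝ)
    (x : Fin n → ℝ) :
    ∃ s : Finset (Fin n → ℝ), s.card ≤ n ∧ cwfM w b ν K x (↑s : Set (Fin n → ℝ))ᶜ = 0 := by
  classical
  refine ⟨Finset.image (fun i => atomv w b ν (K i) i) Finset.univ,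
    le_trans (Finset.card_image_le) (by simp), ?_⟩
  rw [cwfM, Measure.finset_sum_apply]
  apply Finset.sum_eq_zero
  intro i _
  rw [Measure.smul_apply]
  have hmem : atomv w b ν (K i) i ∈ (Finset.image (fun i => atomv w b ν (K i) i) Finset.univ : Finset (Fin n → ℝ)) :=
    Finset.mem_image_of_mem _ (Finset.mem_univ i)
  have : Measure.dirac (atomv w b ν (K i) i)
      ((Finset.image (fun i => atomv w b ν (K i) i) Finset.univ : Finset (Fin n → ℝ)) : Set (Fin n → ℝ))ᶜ = 0 := by
    rw [Measure.dirac_apply' _ (Finset.measurableSet _).compl]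
    simp [hmem]
  rw [this, smul_zero]

lemma key_eq (hne : Nonempty (Fin n)) (w : (Fin n → ℝ) → ℝ) (b ν : Fin n → ℝ)
    (K x : Fin n → ℝ) (hs : ∑ i, x i = 1) (hK0 : ∀ i, 0 ≤ K i)
    (hb : ∀ (μ : Fin n → ℝ) (i : Fin n), μ i + b i ≤ w μ) :
    ∑ i, x i * (⨆ j, ν j + atomv w b ν (K i) i j) = w ν := by
  have hsup : ∀ i, (⨆ j, ν j + atomv w b ν (K i) i j) = w ν := by
    intro i
    apply le_antisymm
    · refine ciSup_le fun j => ?_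
      rcases eq_or_ne j i with rfl | hj
      · simp [atomv]
      · have : ν j + atomv w b ν (K i) i j = ν j + b j - K i := by simp [atomv, hj]; ring
        rw [this]
        have := hb ν j
        have := hK0 i
        linarith
    · have hbdd : BddAbove (Set.range fun j => ν j + atomv w b ν (K i) i j) :=
        Set.Finite.bddAbove (Set.finite_range _)
      have := le_ciSup hbdd i
      simpa [atomv] using this
  calc ∑ i, x i * (⨆ j, ν j + atomv w b ν (K i) i j) = ∑ i, x i * w ν := by
        exact Finset.sum_congr rfl fun i _ => by rw [hsup i]
    _ = (∑ i, x i) * w ν := by rw [Finset.sum_mul]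
    _ = w ν := by rw [hs, one_mul]

lemma key_le (hne : Nonempty (Fin n)) (w : (Fin n → ℝ) → ℝ) (b ν μ : Fin n → ℝ)
    (K x : Fin n → ℝ) (hx : ∀ i, 0 ≤ x i) (hs : ∑ i, x i = 1) (hK0 : ∀ i, 0 ≤ K i)
    (hKC : ∀ i, x i ≠ 0 → x i * K i = ∑ j, (w ν - ν j - b j))
    (hb : ∀ (μ : Fin n → ℝ) (i : Fin n), μ i + b i ≤ w μ)
    (hgrad : w ν + ∑ i, x i * (μ i - ν i) ≤ w μ) :
    ∑ i, x i * (⨆ j, μ j + atomv w b ν (K i) i j) ≤ w μ := by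
  classical
  set u := w μ with hu
  set A : Fin n → ℝ := fun i => μ i + (w ν - ν i) with hA
  set Ci : Fin n → ℝ := fun i => w ν - ν i - b i with hCi
  set C : ℝ := ∑ j, Ci j with hC
  have hCi0 : ∀ i, 0 ≤ Ci i := fun i => by have := hb ν i; simp [hCi]; linarith
  have hC0 : 0 ≤ C := Finset.sum_nonneg fun i _ => hCi0 i
  have hxle : ∀ i, x i ≤ 1 := by
    intro i
    rw [← hs]
    exact Finset.single_le_sum (fun j _ => hx j) (Finset.mem_univ i)
  have hAle : ∀ i, A i ≤ u + Ci i := by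
    intro i
    have := hb μ i
    simp only [hA, hCi]
    linarith
  have hsum_le : ∑ i, x i * A i ≤ u := by
    have : ∑ i, x i * A i = (∑ i, x i * (μ i - ν i)) + (∑ i, x i) * w ν := by
      rw [Finset.sum_mul, ← Finset.sum_add_distrib]
      exact Finset.sum_congr rfl fun i _ => by ring
    rw [this, hs, one_mul]
    linarith
  have hsup_le : ∀ i, (⨆ j, μ j + atomv w b ν (K i) i j) ≤ max (A i) (u - K i) := by
    intro i
    refine ciSup_le fun j => ?_
    rcases eq_or_ne j i with rfl | hj
    · simp only [atomv, if_pos rfl]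
      exact le_max_of_le_left (by simp [hA])
    · have : μ j + atomv w b ν (K i) i j = μ j + b j - K i := by simp [atomv, hj]; ring
      rw [this]
      have := hb μ j
      exact le_max_of_le_right (by linarith)
  have step1 : ∑ i, x i * (⨆ j, μ j + atomv w b ν (K i) i j) ≤
      ∑ i, x i * max (A i) (u - K i) :=
    Finset.sum_le_sum fun i _ => mul_le_mul_of_nonneg_left (hsup_le i) (hx i)
  refine step1.trans ?_
  by_cases hcase : ∀ i, x i ≠ 0 → u - K i ≤ A i
  · have : ∑ i, x i * max (A i) (u - K i) = ∑ i, x i * A i := by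
      refine Finset.sum_congr rfl fun i _ => ?_
      by_cases hxi : x i = 0
      · rw [hxi, zero_mul, zero_mul]
      · rw [max_eq_left (hcase i hxi)]
    rw [this]; exact hsum_le
  · push_neg at hcase
    obtain ⟨i₀, hxi₀, hAi₀⟩ := hcase
    have hmax₀ : max (A i₀) (u - K i₀) = u - K i₀ := max_eq_right hAi₀.le
    have hxK : x i₀ * K i₀ = C := hKC i₀ hxi₀
    have hsplit : ∑ i, x i * max (A i) (u - K i) =
        x i₀ * max (A i₀) (u - K i₀) +
        ∑ i ∈ Finset.univ.erase i₀, x i * max (A i) (u - K i) :=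
      (Finset.add_sum_erase _ _ (Finset.mem_univ i₀)).symm
    rw [hsplit, hmax₀]
    have hterm : ∀ i ∈ Finset.univ.erase i₀, x i * max (A i) (u - K i) ≤ x i * u + Ci i := by
      intro i _
      have h1 : max (A i) (u - K i) ≤ u + Ci i := by
        apply max_le (hAle i)
        have := hK0 i; have := hCi0 i; linarith
      calc x i * max (A i) (u - K i) ≤ x i * (u + Ci i) :=
            mul_le_mul_of_nonneg_left h1 (hx i)
        _ = x i * u + x i * Ci i := by ring
        _ ≤ x i * u + Ci i := by
            have := mul_le_of_le_one_left (hCi0 i) (hxle i)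
            linarith
    have hsum2 : ∑ i ∈ Finset.univ.erase i₀, x i * max (A i) (u - K i) ≤
        (∑ i ∈ Finset.univ.erase i₀, x i * u) + ∑ i ∈ Finset.univ.erase i₀, Ci i := by
      rw [← Finset.sum_add_distrib]
      exact Finset.sum_le_sum hterm
    have h3 : ∑ i ∈ Finset.univ.erase i₀, Ci i ≤ C := by
      rw [hC]
      exact Finset.sum_le_sum_of_subset_of_nonneg (Finset.subset_univ _) fun i _ _ => hCi0 i
    have h4 : x i₀ * u + ∑ i ∈ Finset.univ.erase i₀, x i * u = u := by
      rw [Finset.add_sum_erase _ (fun i => x i * u) (Finset.mem_univ i₀), ← Finset.sum_mul, hs,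
        one_mul]
    have h5 : x i₀ * (u - K i₀) = x i₀ * u - C := by
      rw [mul_sub, hxK]
    linarith

end Stmt2Aux

open Stmt2Aux in
theorem stmt_2 (n : ℕ) (hn : 1 ≤ n) (w : (Fin n → ℝ) → ℝ)
    (hw : IsCWF w) (hdiff : Differentiable ℝ w)
    (b : Fin n → ℝ) (hb : ∀ (μ : Fin n → ℝ) (i : Fin n), μ i + b i ≤ w μ) :
    ∃ Θ : Set (Measure (Fin n → ℝ)),
      (∀ θ ∈ Θ, IsProbabilityMeasure θ) ∧
      (∀ θ ∈ Θ, ∃ s : Finset (Fin n → ℝ), s.card ≤ n ∧ θ (↑s : Set (Fin n → ℝ))ᶜ = 0) ∧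
      ∀ μ : Fin n → ℝ,
        IsLUB {r : ℝ | ∃ θ ∈ Θ, r = ∫ ε, (⨆ i, μ i + ε i) ∂θ} (w μ) := by
  classical
  have hne : Nonempty (Fin n) := Fin.pos_iff_nonempty.mp hn
  set x : (Fin n → ℝ) → Fin n → ℝ := fun ν => grad w ν with hxdef
  set Kf : (Fin n → ℝ) → Fin n → ℝ :=
    fun ν i => if x ν i = 0 then 0 else (∑ j, (w ν - ν j - b j)) / x ν i with hKdef
  have hx : ∀ ν i, 0 ≤ x ν i := fun ν i => grad_nonneg hw hdiff ν i
  have hs : ∀ ν, ∑ i, x ν i = 1 := fun ν => grad_sum hw hdiff ν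
  have hC0 : ∀ ν : Fin n → ℝ, 0 ≤ ∑ j, (w ν - ν j - b j) :=
    fun ν => Finset.sum_nonneg fun j _ => by have := hb ν j; linarith
  have hK0 : ∀ ν i, 0 ≤ Kf ν i := by
    intro ν i
    simp only [hKdef]
    split
    · exact le_refl 0
    · exact div_nonneg (hC0 ν) (hx ν i)
  have hKC : ∀ ν i, x ν i ≠ 0 → x ν i * Kf ν i = ∑ j, (w ν - ν j - b j) := by
    intro ν i hxi
    simp only [hKdef, if_neg hxi]
    field_simp
  refine ⟨Set.range (fun ν => cwfM w b ν (Kf ν) (x ν)), ?_, ?_, ?_⟩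
  · rintro θ ⟨ν, rfl⟩
    exact cwfM_prob w b ν (Kf ν) (x ν) (hx ν) (hs ν)
  · rintro θ ⟨ν, rfl⟩
    exact cwfM_support w b ν (Kf ν) (x ν)
  · intro μ
    constructor
    · rintro r ⟨θ, ⟨ν, rfl⟩, rfl⟩
      rw [cwfM_integral w b ν (Kf ν) (x ν) (hx ν) μ]
      exact key_le hne w b ν μ (Kf ν) (x ν) (hx ν) (hs ν) (hK0 ν) (hKC ν) hb
        (grad_support hw hdiff ν μ)
    · intro y hy
      apply hy
      refine ⟨cwfM w b μ (Kf μ) (x μ), ⟨μ, rfl⟩, ?_⟩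
      rw [cwfM_integral w b μ (Kf μ) (x μ) (hx μ) μ]
      exact (key_eq hne w b μ (Kf μ) (x μ) (hs μ) (hK0 μ) hb).symm
end
end

section
/- Let w : ℝⁿ → ℝ be a choice welfare function (monotone, translation invariant, convex) and let V(x) = sup_{y ∈ ℝⁿ} { yᵀx − w(y) } be its convex conjugate. Then w is superlinear (there exist b₁,…,bₙ with w(μ) ≥ μ_i + b_i for all i and all μ) if and only if V is bounded above on the simplex Δ_{n−1}. -/
open scoped BigOperators
open MeasureTheory

noncomputable section

theorem stmt_7 (n : ℕ) (hn : 1 ≤ n) (w : (Fin n → ℝ) → ℝ) (hw : IsCWF w) :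
    (∃ b : Fin n → ℝ, ∀ (μ : Fin n → ℝ) (i : Fin n), μ i + b i ≤ w μ) ↔
    (∃ c : ℝ, ∀ x ∈ choiceSimplex n, conjFn w x ≤ (c : EReal)) := by
  constructor
  · rintro ⟨b, hb⟩
    have hne : (Finset.univ : Finset (Fin n)).Nonempty :=
      Finset.univ_nonempty_iff.mpr (Fin.pos_iff_nonempty.mp hn)
    set c := Finset.univ.sup' hne (fun i => -b i) with hcdef
    refine ⟨c, fun x hx => ?_⟩
    rw [conjFn, iSup_le_iff]
    intro y
    rw [EReal.coe_le_coe_iff]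
    obtain ⟨hx0, hx1⟩ := hx
    have h1 : ∀ i, y i * x i ≤ x i * (w y - b i) := fun i => by
      rw [mul_comm]; exact mul_le_mul_of_nonneg_left (by linarith [hb y i]) (hx0 i)
    calc ∑ i, y i * x i - w y ≤ (∑ i, x i * (w y - b i)) - w y := by
          have : ∑ i, y i * x i ≤ ∑ i, x i * (w y - b i) :=
            Finset.sum_le_sum fun i _ => h1 i
          linarith
      _ = ∑ i, x i * (-b i) := by
          have : ∑ i, x i * (w y - b i) = (∑ i, x i) * w y + ∑ i, x i * (-b i) := by
            rw [Finset.sum_mul, ← Finset.sum_add_distrib]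
            exact Finset.sum_congr rfl fun i _ => by ring
          rw [this, hx1]; ring
      _ ≤ ∑ i, x i * c :=
          Finset.sum_le_sum fun i _ =>
            mul_le_mul_of_nonneg_left (Finset.le_sup' (fun i => -b i) (Finset.mem_univ i)) (hx0 i)
      _ = c := by rw [← Finset.sum_mul, hx1, one_mul]
  · rintro ⟨c, hc⟩
    refine ⟨fun _ => -c, fun μ i => ?_⟩
    have hmem : (Pi.single i 1 : Fin n → ℝ) ∈ choiceSimplex n := by
      constructor
      · intro j
        rcases eq_or_ne j i with h | h <;> simp [Pi.single_apply, h]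
      · simp [Pi.single_apply]
    have h0 := hc _ hmem
    rw [conjFn, iSup_le_iff] at h0
    have h2 := h0 μ
    rw [EReal.coe_le_coe_iff] at h2
    have h3 : ∑ j, μ j * (Pi.single i 1 : Fin n → ℝ) j = μ i := by
      simp [Pi.single_apply]
    rw [h3] at h2
    show μ i + -c ≤ w μ
    linarith
end
end

section
/- Let w : ℝⁿ → ℝ be a differentiable choice welfare function (monotone, translation invariant, convex) that is superlinear. Then the gradient map ∇w spans the interior of the simplex: for every x ∈ ℝⁿ with xᵢ > 0 for all i and Σᵢ xᵢ = 1, there exists μ ∈ ℝⁿ such that ∇w(μ) = x. -/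
open scoped BigOperators
open MeasureTheory

noncomputable section

/-- The gradient of w at μ, whose i-th component is the partial derivative ∂w/∂μᵢ. -/
def grad {n : ℕ} (w : (Fin n → ℝ) → ℝ) (μ : Fin n → ℝ) : Fin n → ℝ :=
  fun i => fderiv ℝ w μ (Pi.single i 1)

/-! Fix `x` in the open simplex and put `f μ = w μ - ⟨x, μ⟩`. Translation invariance of `w`
and `∑ xᵢ = 1` make `f` invariant under adding constants, so `f` may be minimised over the
slice `{ν | ν i₀ = 0}`. There superlinearity makes `f` coercive: with `i` a maximal and `j` a
minimal coordinate of `ν`, `f ν ≥ νᵢ + bᵢ - ⟨x, ν⟩ ≥ xⱼ (νᵢ - νⱼ) + bᵢ ≥ (min x) ‖ν‖ + min b`.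
Hence `f` has a global minimum `μ₀`, where `∇w(μ₀) = x`. -/

open Filter Topology

section

variable {ι : Type*} [Fintype ι]

theorem mul_sub_le_sub_sum_mul {x ν : ι → ℝ} (hx : ∀ k, 0 ≤ x k) (hsum : ∑ k, x k = 1)
    {i : ι} (hi : ∀ k, ν k ≤ ν i) (j : ι) :
    x j * (ν i - ν j) ≤ ν i - ∑ k, x k * ν k := by
  have hsplit : ν i - ∑ k, x k * ν k = ∑ k, x k * (ν i - ν k) := by
    simp only [mul_sub, Finset.sum_sub_distrib, ← Finset.sum_mul, hsum, one_mul]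
  rw [hsplit]
  exact Finset.single_le_sum (f := fun k => x k * (ν i - ν k))
    (fun k _ => mul_nonneg (hx k) (sub_nonneg.2 (hi k))) (Finset.mem_univ j)

theorem norm_le_sub_of_apply_eq_zero {ν : ι → ℝ} {i₀ i j : ι} (h₀ : ν i₀ = 0)
    (hi : ∀ k, ν k ≤ ν i) (hj : ∀ k, ν j ≤ ν k) : ‖ν‖ ≤ ν i - ν j := by
  refine (pi_norm_le_iff_of_nonneg (by linarith [hi i₀, hj i₀])).2 fun k => ?_
  rw [Real.norm_eq_abs, abs_le]
  constructor <;> linarith [hi k, hj k, hi i₀, hj i₀]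

theorem exists_mul_norm_add_le_sub_sum_mul {w : (ι → ℝ) → ℝ} {b x : ι → ℝ}
    (hb : ∀ μ i, μ i + b i ≤ w μ) (hx : ∀ k, 0 < x k) (hsum : ∑ k, x k = 1) (i₀ : ι) :
    ∃ ε > 0, ∃ d, ∀ ν : ι → ℝ, ν i₀ = 0 → ε * ‖ν‖ + d ≤ w ν - ∑ k, x k * ν k := by
  have : Nonempty ι := ⟨i₀⟩
  obtain ⟨jx, hjx⟩ := Finite.exists_min x
  obtain ⟨jb, hjb⟩ := Finite.exists_min b
  refine ⟨x jx, hx jx, b jb, fun ν h₀ => ?_⟩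
  obtain ⟨i, hi⟩ := Finite.exists_max ν
  obtain ⟨j, hj⟩ := Finite.exists_min ν
  have hnorm := norm_le_sub_of_apply_eq_zero h₀ hi hj
  calc x jx * ‖ν‖ + b jb
      ≤ x j * (ν i - ν j) + b i := by
        gcongr ?_ + ?_
        · calc x jx * ‖ν‖ ≤ x j * ‖ν‖ := by gcongr; exact hjx j
            _ ≤ x j * (ν i - ν j) := by gcongr; exact (hx j).le
        · exact hjb i
    _ ≤ ν i - ∑ k, x k * ν k + b i := by
        gcongr; exact mul_sub_le_sub_sum_mul (fun k => (hx k).le) hsum hi j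
    _ ≤ w ν - ∑ k, x k * ν k := by linarith [hb ν i]

theorem exists_forall_le_of_add_const_invariant {f : (ι → ℝ) → ℝ} (hf : Continuous f)
    (hinv : ∀ μ t, f (μ + fun _ => t) = f μ) {i₀ : ι} {ε d : ℝ} (hε : 0 < ε)
    (hcoer : ∀ ν : ι → ℝ, ν i₀ = 0 → ε * ‖ν‖ + d ≤ f ν) :
    ∃ μ₀, ∀ μ, f μ₀ ≤ f μ := by
  have hslice : IsClosed {ν : ι → ℝ | ν i₀ = 0} :=
    isClosed_eq (continuous_apply i₀) continuous_const
  have hfar : ∀ᶠ ν in cocompact (ι → ℝ) ⊓ 𝓟 {ν | ν i₀ = 0}, f 0 ≤ f ν := by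
    refine eventually_inf_principal.2 ?_
    filter_upwards [tendsto_norm_cocompact_atTop.eventually_ge_atTop ((f 0 - d) / ε)]
      with ν hν h₀
    have := hcoer ν h₀
    rw [div_le_iff₀ hε] at hν
    linarith
  obtain ⟨μ₀, -, hmin⟩ := hf.continuousOn.exists_isMinOn' hslice rfl hfar
  refine ⟨μ₀, fun μ => ?_⟩
  calc f μ₀ ≤ f (μ + fun _ => -μ i₀) := hmin (by simp)
    _ = f μ := hinv μ _

theorem exists_fderiv_eq_sum_smul_proj {w : (ι → ℝ) → ℝ}
    (hinv : ∀ μ t, w (μ + fun _ => t) = w μ + t) (hdiff : Differentiable ℝ w)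
    {b : ι → ℝ} (hb : ∀ μ i, μ i + b i ≤ w μ)
    {x : ι → ℝ} (hx : ∀ k, 0 < x k) (hsum : ∑ k, x k = 1) :
    ∃ μ, fderiv ℝ w μ = ∑ k, x k • ContinuousLinearMap.proj k := by
  set L : (ι → ℝ) →L[ℝ] ℝ := ∑ k, x k • ContinuousLinearMap.proj k
  have hL : ∀ μ, L μ = ∑ k, x k * μ k := fun μ => by simp [L]
  obtain ⟨i₀, -, -⟩ := Finset.exists_ne_zero_of_sum_ne_zero (hsum.trans_ne one_ne_zero)
  obtain ⟨ε, hε, d, hcoer⟩ := exists_mul_norm_add_le_sub_sum_mul hb hx hsum i₀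
  have hinvf : ∀ μ t, w (μ + fun _ => t) - L (μ + fun _ => t) = w μ - L μ := fun μ t => by
    simp only [hinv, hL, Pi.add_apply, mul_add, Finset.sum_add_distrib, ← Finset.sum_mul, hsum]
    ring
  obtain ⟨μ₀, hmin⟩ := exists_forall_le_of_add_const_invariant
    (hdiff.continuous.sub L.continuous) hinvf hε (fun ν h₀ => (hL ν).symm ▸ hcoer ν h₀)
  refine ⟨μ₀, ?_⟩
  have hcrit : fderiv ℝ (fun μ => w μ - L μ) μ₀ = 0 :=
    IsLocalMin.fderiv_eq_zero (Eventually.of_forall hmin)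
  rwa [fderiv_fun_sub (hdiff μ₀) L.differentiableAt, L.fderiv, sub_eq_zero] at hcrit

end

theorem stmt_8_general (n : ℕ) (w : (Fin n → ℝ) → ℝ)
    (hw : IsCWF w) (hdiff : Differentiable ℝ w)
    (b : Fin n → ℝ) (hb : ∀ (μ : Fin n → ℝ) (i : Fin n), μ i + b i ≤ w μ) :
    ∀ x : Fin n → ℝ, (∀ i, 0 < x i) → ∑ i, x i = 1 →
      ∃ μ : Fin n → ℝ, grad w μ = x := by
  intro x hx hsum
  obtain ⟨μ, hμ⟩ := exists_fderiv_eq_sum_smul_proj hw.2.1 hdiff hb hx hsum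
  refine ⟨μ, funext fun i => ?_⟩
  simp [grad, hμ, Pi.single_apply]

theorem stmt_8 (n : ℕ) (hn : 1 ≤ n) (w : (Fin n → ℝ) → ℝ)
    (hw : IsCWF w) (hdiff : Differentiable ℝ w)
    (b : Fin n → ℝ) (hb : ∀ (μ : Fin n → ℝ) (i : Fin n), μ i + b i ≤ w μ) :
    ∀ x : Fin n → ℝ, (∀ i, 0 < x i) → ∑ i, x i = 1 →
      ∃ μ : Fin n → ℝ, grad w μ = x :=
  stmt_8_general n w hw hdiff b hb
end
end

section
/- Let w : ℝ² → ℝ be a differentiable choice welfare function (monotone, translation invariant, convex) in two variables. Then there exists a Borel probability measure θ on ℝ² (possibly assigning mass to points with coordinates equal to −∞, i.e., a probability measure on the extended plane) such that w(μ₁, μ₂) = E_θ[max{μ₁ + ε₁, μ₂ + ε₂}] for all (μ₁, μ₂) ∈ ℝ². Moreover, if w is superlinear, then θ can be chosen to be a Borel probability measure on ℝ² with E_θ|ε₁| < ∞ and E_θ|ε₂| < ∞. -/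
/-!
Translation invariance gives `w μ = μ 1 + g (μ 0 - μ 1)` with `g t = w (t, 0)` convex and
`0 ≤ g' ≤ 1`, and `g'` is continuous, being the derivative of a differentiable convex function.
Let `X` be the quantile transform of `g'` on `(0, 1)`, an `EReal`-valued random variable with
`P(X < t) = g' t`. Then `t ↦ E[(t - X)⁺ - (-X)⁺]` has derivative `P(X < t) = g' t`, so it equals
`g t - g 0`. Taking `ε` with `max ε₀ ε₁ = g 0` and `ε₁ - ε₀ = X` turns
`E[max (μ 0 + ε₀) (μ 1 + ε₁)]` into exactly `μ 1 + g 0 + E[(μ 0 - μ 1 - X)⁺ - (-X)⁺] = w μ`.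

If `w` is superlinear, `t - g t` and `-g t` are bounded above; by monotone convergence in `t`
these bounds control `E[X⁺]` and `E[X⁻]`, so `X` is integrable, hence almost surely finite.
-/

open scoped BigOperators
open MeasureTheory

noncomputable section

open Set Filter Topology
open scoped ENNReal

theorem ConvexOn.continuous_deriv {g : ℝ → ℝ} (hconv : ConvexOn ℝ univ g)
    (hg : Differentiable ℝ g) : Continuous (deriv g) := by
  refine continuous_iff_continuousAt.2 fun t => tendsto_order.2 ⟨fun b hb => ?_, fun b hb => ?_⟩
  · have hslope : Tendsto (slope g t) (𝓝[<] t) (𝓝 (deriv g t)) :=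
      (hasDerivAt_iff_tendsto_slope.1 (hg t).hasDerivAt).mono_left
        (nhdsWithin_mono _ fun _ h => ne_of_lt h)
    obtain ⟨r, hbr, hrt⟩ :=
      ((hslope.eventually (lt_mem_nhds hb)).and self_mem_nhdsWithin).exists
    have hcont : ContinuousAt (fun s => slope g r s) t := by
      simp only [slope_def_field]
      exact (hg.continuous.continuousAt.sub continuousAt_const).div
        (continuousAt_id.sub continuousAt_const) (sub_ne_zero.2 (ne_of_gt hrt))
    rw [slope_comm] at hbr
    filter_upwards [hcont.eventually (lt_mem_nhds hbr), Ioi_mem_nhds hrt] with s hs hrs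
    exact hs.trans_le (hconv.slope_le_deriv trivial trivial hrs (hg s))
  · have hslope : Tendsto (slope g t) (𝓝[>] t) (𝓝 (deriv g t)) :=
      (hasDerivAt_iff_tendsto_slope.1 (hg t).hasDerivAt).mono_left
        (nhdsWithin_mono _ fun _ h => ne_of_gt h)
    obtain ⟨r, hbr, htr⟩ :=
      ((hslope.eventually (gt_mem_nhds hb)).and self_mem_nhdsWithin).exists
    have hcont : ContinuousAt (fun s => slope g s r) t := by
      simp only [slope_def_field]
      exact (continuousAt_const.sub hg.continuous.continuousAt).div
        (continuousAt_const.sub continuousAt_id) (sub_ne_zero.2 (ne_of_gt htr))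
    filter_upwards [hcont.eventually (gt_mem_nhds hbr), Iio_mem_nhds htr] with s hs hsr
    exact (hconv.deriv_le_slope trivial trivial hsr (hg s)).trans_lt hs

theorem lintegral_le_ofReal_of_le_iSup {α : Type*} [MeasurableSpace α] {μ : Measure α}
    {f : ℕ → α → ℝ} {φ : α → ℝ≥0∞} {C : ℝ} (hint : ∀ n, Integrable (f n) μ)
    (hnn : ∀ n, 0 ≤ᵐ[μ] f n) (hmono : ∀ᵐ x ∂μ, Monotone fun n => f n x)
    (hC : ∀ n, ∫ x, f n x ∂μ ≤ C) (hφ : ∀ᵐ x ∂μ, φ x ≤ ⨆ n, ENNReal.ofReal (f n x)) :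
    ∫⁻ x, φ x ∂μ ≤ ENNReal.ofReal C :=
  calc ∫⁻ x, φ x ∂μ ≤ ∫⁻ x, ⨆ n, ENNReal.ofReal (f n x) ∂μ := lintegral_mono_ae hφ
    _ = ⨆ n, ∫⁻ x, ENNReal.ofReal (f n x) ∂μ :=
      lintegral_iSup' (fun n => (hint n).aemeasurable.ennreal_ofReal)
        (hmono.mono fun _ hx => ENNReal.ofReal_mono.comp hx)
    _ ≤ ENNReal.ofReal C := iSup_le fun n => by
      rw [← ofReal_integral_eq_lintegral_ofReal (hint n) (hnn n)]
      exact ENNReal.ofReal_le_ofReal (hC n)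

theorem ae_coe_toReal_eq_of_lintegral_ne_top {ν : Measure EReal}
    (hpos : ∫⁻ x, x.toENNReal ∂ν ≠ ⊤) (hneg : ∫⁻ x, (-x).toENNReal ∂ν ≠ ⊤) :
    ∀ᵐ x ∂ν, (x.toReal : EReal) = x := by
  filter_upwards [ae_lt_top measurable_ereal_toENNReal hpos,
    ae_lt_top (measurable_ereal_toENNReal.comp measurable_neg) hneg] with x hx hx'
  exact EReal.coe_toReal (EReal.toENNReal_ne_top_iff.1 hx.ne)
    (EReal.neg_eq_top_iff.not.1 (EReal.toENNReal_ne_top_iff.1 hx'.ne))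

theorem integrable_toReal_of_lintegral_ne_top {ν : Measure EReal}
    (hpos : ∫⁻ x, x.toENNReal ∂ν ≠ ⊤) (hneg : ∫⁻ x, (-x).toENNReal ∂ν ≠ ⊤) :
    Integrable EReal.toReal ν := by
  refine ⟨measurable_ereal_toReal.aestronglyMeasurable, ?_⟩
  have hle : ∀ x : EReal, ‖x.toReal‖ₑ ≤ x.toENNReal + (-x).toENNReal := fun x => by
    induction x with
    | bot | top => simp
    | coe x =>
      rw [← EReal.coe_neg, EReal.toENNReal_of_ne_top (EReal.coe_ne_top _),
        EReal.toENNReal_of_ne_top (EReal.coe_ne_top _), EReal.toReal_coe, EReal.toReal_coe,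
        Real.enorm_eq_ofReal_abs]
      rcases le_total 0 x with h | h
      · simp [abs_of_nonneg h]
      · simp [abs_of_nonpos h]
  calc ∫⁻ x, ‖x.toReal‖ₑ ∂ν ≤ ∫⁻ x, x.toENNReal + (-x).toENNReal ∂ν := lintegral_mono hle
    _ < ⊤ := by
      rw [lintegral_add_left measurable_ereal_toENNReal]
      exact ENNReal.add_lt_top.2 ⟨hpos.lt_top, hneg.lt_top⟩

section Quantile

/-- Taken in `EReal`, it is `⊥` when `u < F` everywhere and `⊤` when `F ≤ u` everywhere. -/
def quantile (F : ℝ → ℝ) (u : ℝ) : EReal := sInf ((↑) '' {v : ℝ | u < F v})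

def quantileLaw (F : ℝ → ℝ) : Measure EReal :=
  (volume.restrict (Ioo (0 : ℝ) 1)).map (quantile F)

variable {F : ℝ → ℝ}

theorem monotone_quantile : Monotone (quantile F) := fun _ _ h =>
  sInf_le_sInf <| image_mono fun _ hv => h.trans_lt hv

theorem quantile_le {u v : ℝ} (h : u < F v) : quantile F u ≤ v :=
  sInf_le ⟨v, h, rfl⟩

theorem quantile_lt_coe_iff (hF : Monotone F) (hc : Continuous F) {u t : ℝ} :
    quantile F u < t ↔ u < F t := by
  constructor
  · intro h
    obtain ⟨_, ⟨v, hv, rfl⟩, hvt⟩ := sInf_lt_iff.1 h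
    exact hv.trans_le (hF (EReal.coe_lt_coe_iff.1 hvt).le)
  · intro h
    obtain ⟨v, hv, hvt⟩ :=
      (((hc.tendsto t).mono_left nhdsWithin_le_nhds).eventually (lt_mem_nhds h)).and
        (self_mem_nhdsWithin (s := Iio t)) |>.exists
    exact (quantile_le hv).trans_lt (EReal.coe_lt_coe_iff.2 hvt)

theorem quantile_preimage_singleton_subset (hF : Monotone F) (hc : Continuous F) (t : ℝ) :
    quantile F ⁻¹' {(t : EReal)} ⊆ {F t} := by
  intro u (hu : quantile F u = t)
  have hle : F t ≤ u := not_lt.1 fun h => (quantile_lt_coe_iff hF hc).2 h |>.ne hu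
  have hge : u ≤ F t := ge_of_tendsto ((hc.tendsto t).mono_left nhdsWithin_le_nhds)
    (eventually_nhdsWithin_of_forall (s := Ioi t) fun v (hv : t < v) =>
      ((quantile_lt_coe_iff hF hc).1 (hu ▸ EReal.coe_lt_coe_iff.2 hv)).le)
  exact le_antisymm hge hle

instance : IsProbabilityMeasure (volume.restrict (Ioo (0 : ℝ) 1)) := ⟨by simp⟩

instance : IsProbabilityMeasure (quantileLaw F) :=
  Measure.isProbabilityMeasure_map monotone_quantile.measurable.aemeasurable

theorem quantileLaw_singleton (hF : Monotone F) (hc : Continuous F) (t : ℝ) :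
    quantileLaw F {(t : EReal)} = 0 := by
  rw [quantileLaw, Measure.map_apply monotone_quantile.measurable (measurableSet_singleton _)]
  exact measure_mono_null (quantile_preimage_singleton_subset hF hc t)
    (Measure.restrict_le_self.absolutelyContinuous (measure_singleton _))

theorem quantileLaw_Iio (hF : Monotone F) (hc : Continuous F) {t : ℝ} (ht : F t ≤ 1) :
    quantileLaw F (Iio (t : EReal)) = ENNReal.ofReal (F t) := by
  have hpre : quantile F ⁻¹' Iio (t : EReal) = Iio (F t) := by
    ext u; exact quantile_lt_coe_iff hF hc
  rw [quantileLaw, Measure.map_apply monotone_quantile.measurable measurableSet_Iio, hpre,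
    Measure.restrict_apply measurableSet_Iio, Iio_inter_Ioo, min_eq_left ht,
    Real.volume_Ioo, sub_zero]

end Quantile

/-- For real `x` this is `(t - x)⁺ - (-x)⁺`. -/
def hinge (t : ℝ) (x : EReal) : ℝ := (max ((t : EReal) - max x 0) (min x 0)).toReal

@[simp] theorem hinge_bot (t : ℝ) : hinge t ⊥ = t := by simp [hinge]

@[simp] theorem hinge_top (t : ℝ) : hinge t ⊤ = 0 := by simp [hinge]

@[simp] theorem hinge_coe (t x : ℝ) : hinge t x = max (t - max x 0) (min x 0) := by
  simp only [hinge]; norm_cast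

theorem hinge_zero (x : EReal) : hinge 0 x = 0 := by
  induction x with
  | bot | top => simp
  | coe x => rcases le_total x 0 with h | h <;> simp [h]

theorem hinge_le (t : ℝ) (x : EReal) : hinge t x ≤ max t 0 := by
  induction x with
  | bot | top => simp
  | coe x =>
    rw [hinge_coe]
    exact max_le ((sub_le_self t (le_max_right x 0)).trans (le_max_left t 0))
      ((min_le_right x 0).trans (le_max_right t 0))

theorem hinge_mono (x : EReal) : Monotone (hinge · x) := by
  intro a b hab
  induction x with
  | bot => simpa
  | top => simp
  | coe x => simp only [hinge_coe]; gcongr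

theorem abs_hinge_sub_hinge_le (x : EReal) (a b : ℝ) : |hinge a x - hinge b x| ≤ |a - b| := by
  induction x with
  | bot | top => simp
  | coe x => simpa using abs_max_sub_max_le_abs (a - max x 0) (b - max x 0) (min x 0)

theorem lipschitzWith_hinge (x : EReal) : LipschitzWith 1 (hinge · x) :=
  LipschitzWith.of_dist_le_mul fun a b => by
    simpa [Real.dist_eq] using abs_hinge_sub_hinge_le x a b

theorem measurable_hinge (t : ℝ) : Measurable (hinge t) := by
  unfold hinge; fun_prop

theorem hasDerivAt_hinge {t : ℝ} {x : EReal} (hx : x ≠ t) :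
    HasDerivAt (hinge · x) ((Iio (t : EReal)).indicator 1 x) t := by
  induction x with
  | bot => simpa using hasDerivAt_id' t
  | top => simpa using hasDerivAt_const t (0 : ℝ)
  | coe x =>
    rcases lt_or_gt_of_ne (EReal.coe_ne_coe_iff.1 hx) with h | h
    · have : (hinge · x) =ᶠ[𝓝 t] fun s => s - max x 0 := by
        filter_upwards [Ioi_mem_nhds h] with s hs
        rw [hinge_coe, max_eq_left]
        rcases le_total x 0 with h0 | h0 <;> simp [h0] <;> linarith [mem_Ioi.1 hs]
      simpa [h] using ((hasDerivAt_id' t).sub_const (max x 0)).congr_of_eventuallyEq this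
    · have : (hinge · x) =ᶠ[𝓝 t] fun _ => min x 0 := by
        filter_upwards [Iio_mem_nhds h] with s hs
        rw [hinge_coe, max_eq_right]
        rcases le_total x 0 with h0 | h0 <;> simp [h0] <;> linarith [mem_Iio.1 hs]
      simpa [h.le, not_lt.2 h.le] using (hasDerivAt_const t (min x 0)).congr_of_eventuallyEq this

theorem toENNReal_le_iSup_sub_hinge (x : EReal) :
    x.toENNReal ≤ ⨆ n : ℕ, ENNReal.ofReal (n - hinge n x) := by
  induction x with
  | bot => simp
  | top => simp [ENNReal.iSup_natCast]
  | coe x =>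
    refine le_iSup_of_le ⌈x⌉₊ ?_
    rw [EReal.toENNReal_of_ne_top (EReal.coe_ne_top x), EReal.toReal_coe, hinge_coe]
    refine ENNReal.ofReal_le_ofReal (le_sub_comm.1 (max_le ?_ ?_))
    · linarith [le_max_left x 0]
    · linarith [min_le_right x 0, Nat.le_ceil x]

theorem neg_toENNReal_le_iSup_neg_hinge (x : EReal) :
    (-x).toENNReal ≤ ⨆ n : ℕ, ENNReal.ofReal (-hinge (-n) x) := by
  induction x with
  | bot => simp [ENNReal.iSup_natCast]
  | top => simp
  | coe x =>
    refine le_iSup_of_le ⌈-x⌉₊ ?_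
    rw [← EReal.coe_neg, EReal.toENNReal_of_ne_top (EReal.coe_ne_top _), EReal.toReal_coe]
    refine ENNReal.ofReal_le_ofReal ?_
    rcases le_total x 0 with h | h <;> simp [h] <;> linarith [Nat.le_ceil (-x)]

section IntegralHinge

variable {ν : Measure EReal} [IsFiniteMeasure ν]

theorem integrable_hinge (t : ℝ) : Integrable (hinge t) ν :=
  Integrable.of_bound (measurable_hinge t).aestronglyMeasurable |t| <| ae_of_all _ fun x => by
    simpa [hinge_zero] using abs_hinge_sub_hinge_le x t 0

theorem hasDerivAt_integral_hinge {t : ℝ} (ht : ν {(t : EReal)} = 0) :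
    HasDerivAt (fun s => ∫ x, hinge s x ∂ν) (ν.real (Iio (t : EReal))) t := by
  have hne : ∀ᵐ x ∂ν, x ≠ (t : EReal) := measure_eq_zero_iff_ae_notMem.1 ht
  have key := hasDerivAt_integral_of_dominated_loc_of_lip (bound := fun _ => (1 : ℝ))
    (F' := (Iio (t : EReal)).indicator 1) univ_mem
    (Eventually.of_forall fun s => (measurable_hinge s).aestronglyMeasurable)
    (integrable_hinge t) ((measurable_one.indicator measurableSet_Iio).aestronglyMeasurable)
    (ae_of_all _ fun x => by simpa using lipschitzWith_hinge x)
    (integrable_const 1) (hne.mono fun x hx => hasDerivAt_hinge hx)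
  simpa [integral_indicator_one measurableSet_Iio] using key.2

theorem integral_hinge_eq_sub {g : ℝ → ℝ} (hg : Differentiable ℝ g)
    (hatom : ∀ t : ℝ, ν {(t : EReal)} = 0) (hcdf : ∀ t : ℝ, ν.real (Iio (t : EReal)) = deriv g t)
    (t : ℝ) : ∫ x, hinge t x ∂ν = g t - g 0 := by
  have hderiv : ∀ s, HasDerivAt (fun s => ∫ x, hinge s x ∂ν - g s) 0 s := fun s => by
    have := (hasDerivAt_integral_hinge (hatom s)).sub (hg s).hasDerivAt
    rwa [hcdf, sub_self] at this
  have := is_const_of_deriv_eq_zero (fun s => (hderiv s).differentiableAt)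
    (fun s => (hderiv s).deriv) t 0
  simp only [hinge_zero, integral_zero] at this
  linarith

end IntegralHinge

section Superlinear

variable {ν : Measure EReal} [IsProbabilityMeasure ν]

theorem lintegral_toENNReal_le {C : ℝ} (h : ∀ t, t - ∫ x, hinge t x ∂ν ≤ C) :
    ∫⁻ x, x.toENNReal ∂ν ≤ ENNReal.ofReal C := by
  refine lintegral_le_ofReal_of_le_iSup (f := fun n x => n - hinge n x)
    (fun n => (integrable_const _).sub (integrable_hinge _))
    (fun n => ae_of_all _ fun x => ?_) (ae_of_all _ fun x a b hab => ?_)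
    (fun n => ?_) (ae_of_all _ toENNReal_le_iSup_sub_hinge)
  · simpa using hinge_le n x
  · have := (le_abs_self _).trans (abs_hinge_sub_hinge_le x b a)
    rw [abs_of_nonneg (sub_nonneg.2 (Nat.cast_le.2 hab))] at this
    simp only
    linarith
  · simpa [integral_sub (integrable_const _) (integrable_hinge _)] using h n

theorem lintegral_neg_toENNReal_le {C : ℝ} (h : ∀ t, -∫ x, hinge t x ∂ν ≤ C) :
    ∫⁻ x, (-x).toENNReal ∂ν ≤ ENNReal.ofReal C := by
  refine lintegral_le_ofReal_of_le_iSup (f := fun n x => -hinge (-n) x)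
    (fun n => (integrable_hinge _).neg)
    (fun n => ae_of_all _ fun x => ?_) (ae_of_all _ fun x a b hab => ?_)
    (fun n => ?_) (ae_of_all _ neg_toENNReal_le_iSup_neg_hinge)
  · simpa using hinge_le (-n) x
  · simpa using hinge_mono x (neg_le_neg (Nat.cast_le.2 hab) : (-b : ℝ) ≤ -a)
  · simpa [integral_neg] using h (-n)

end Superlinear

/-- The pair `ε` with `max ε₀ ε₁ = c` and `ε₁ - ε₀ = x`. -/
def noise (c : ℝ) (x : EReal) : Fin 2 → EReal := ![c - max x 0, c + min x 0]

def realNoise (c s : ℝ) : Fin 2 → ℝ := ![c - max s 0, c + min s 0]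

theorem noise_coe (c s : ℝ) : noise c s = fun i => (realNoise c s i : EReal) := by
  ext i; fin_cases i <;> simp [noise, realNoise] <;> norm_cast

theorem max_add_realNoise (μ : Fin 2 → ℝ) (c s : ℝ) :
    max (μ 0 + realNoise c s 0) (μ 1 + realNoise c s 1) = μ 1 + c + hinge (μ 0 - μ 1) s := by
  rw [hinge_coe, ← max_add_add_left]
  simp only [realNoise, Matrix.cons_val_zero, Matrix.cons_val_one]
  congr 1 <;> ring

theorem toReal_max_add_noise (μ : Fin 2 → ℝ) (c : ℝ) (x : EReal) :
    (max (μ 0 + noise c x 0) (μ 1 + noise c x 1)).toReal = μ 1 + c + hinge (μ 0 - μ 1) x := by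
  induction x with
  | bot => simp [noise, ← EReal.coe_add]; ring
  | top => simp [noise, ← EReal.coe_add]
  | coe s =>
    rw [← max_add_realNoise, noise_coe]
    norm_cast

theorem max_noise (c : ℝ) (x : EReal) : max (noise c x 0) (noise c x 1) = c := by
  induction x with
  | bot | top => simp [noise]
  | coe s =>
    rw [noise_coe]
    rcases le_total s 0 with h | h <;> simp [realNoise, h] <;> norm_cast <;> linarith

theorem noise_ne_top_and_not_both_bot (c : ℝ) (x : EReal) :
    noise c x 0 ≠ ⊤ ∧ noise c x 1 ≠ ⊤ ∧ (noise c x 0 ≠ ⊥ ∨ noise c x 1 ≠ ⊥) := by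
  have h := max_noise c x
  refine ⟨ne_top_of_le_ne_top (EReal.coe_ne_top c) (h ▸ le_max_left _ _),
    ne_top_of_le_ne_top (EReal.coe_ne_top c) (h ▸ le_max_right _ _), ?_⟩
  by_contra! hbot
  simp [hbot.1, hbot.2] at h

theorem measurable_noise (c : ℝ) : Measurable (noise c) := by
  refine measurable_pi_lambda _ fun i => ?_
  fin_cases i <;> simp [noise] <;> fun_prop

theorem measurable_realNoise (c : ℝ) : Measurable (realNoise c) := by
  refine measurable_pi_lambda _ fun i => ?_
  fin_cases i <;> simp [realNoise] <;> fun_prop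

theorem abs_realNoise_le (c s : ℝ) (i : Fin 2) : |realNoise c s i| ≤ |c| + |s| := by
  fin_cases i <;> rcases le_total s 0 with h | h <;> simp [realNoise, h] <;>
    linarith [abs_add_le c s, abs_sub c s, abs_nonneg s]

section Representation

variable {w : (Fin 2 → ℝ) → ℝ} {ν : Measure EReal} [IsProbabilityMeasure ν] {c : ℝ}

theorem exists_noise_of_eq_integral_hinge
    (hw : ∀ μ : Fin 2 → ℝ, w μ = ∫ x, (μ 1 + c + hinge (μ 0 - μ 1) x) ∂ν) :
    ∃ θ : Measure (Fin 2 → EReal), IsProbabilityMeasure θ ∧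
      (∀ᵐ ε ∂θ, ε 0 ≠ ⊤ ∧ ε 1 ≠ ⊤ ∧ (ε 0 ≠ ⊥ ∨ ε 1 ≠ ⊥)) ∧
      ∀ μ : Fin 2 → ℝ,
        w μ = ∫ ε, (max ((μ 0 : EReal) + ε 0) ((μ 1 : EReal) + ε 1)).toReal ∂θ := by
  have hmeas := measurable_noise c
  refine ⟨ν.map (noise c), Measure.isProbabilityMeasure_map hmeas.aemeasurable, ?_, fun μ => ?_⟩
  · exact (ae_map_iff hmeas.aemeasurable (by measurability)).2
      (ae_of_all _ (noise_ne_top_and_not_both_bot c))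
  · have hval : Measurable fun ε : Fin 2 → EReal =>
        (max ((μ 0 : EReal) + ε 0) ((μ 1 : EReal) + ε 1)).toReal := by fun_prop
    rw [integral_map hmeas.aemeasurable hval.aestronglyMeasurable]
    simpa only [toReal_max_add_noise] using hw μ

theorem exists_realNoise_of_eq_integral_hinge
    (hw : ∀ μ : Fin 2 → ℝ, w μ = ∫ x, (μ 1 + c + hinge (μ 0 - μ 1) x) ∂ν)
    (hfin : ∀ᵐ x ∂ν, (x.toReal : EReal) = x) (hint : Integrable EReal.toReal ν) :
    ∃ θ : Measure (Fin 2 → ℝ), IsProbabilityMeasure θ ∧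
      Integrable (fun ε : Fin 2 → ℝ => |ε 0|) θ ∧
      Integrable (fun ε : Fin 2 → ℝ => |ε 1|) θ ∧
      ∀ μ : Fin 2 → ℝ, w μ = ∫ ε, max (μ 0 + ε 0) (μ 1 + ε 1) ∂θ := by
  set θ := ν.map (realNoise c ∘ EReal.toReal)
  have hmeas := (measurable_realNoise c).comp measurable_ereal_toReal
  have hint_abs : ∀ i : Fin 2, Integrable (fun ε : Fin 2 → ℝ => |ε i|) θ := fun i => by
    have habs : Measurable fun ε : Fin 2 → ℝ => |ε i| := by fun_prop
    rw [integrable_map_measure habs.aestronglyMeasurable hmeas.aemeasurable]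
    exact ((integrable_const |c|).add hint.abs).mono' (habs.comp hmeas).aestronglyMeasurable
      (ae_of_all _ fun x => by simpa using abs_realNoise_le c x.toReal i)
  refine ⟨θ, Measure.isProbabilityMeasure_map hmeas.aemeasurable, hint_abs 0, hint_abs 1,
    fun μ => ?_⟩
  rw [integral_map hmeas.aemeasurable (by fun_prop), hw μ]
  refine integral_congr_ae (hfin.mono fun x hx => ?_)
  simp only [Function.comp_apply, max_add_realNoise, hx]

end Representation

def profile {n : ℕ} (w : (Fin n → ℝ) → ℝ) (i : Fin n) (t : ℝ) : ℝ := w (Pi.single i t)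

namespace IsCWF

variable {n : ℕ} {w : (Fin n → ℝ) → ℝ}

theorem convexOn_profile (hw : IsCWF w) (i : Fin n) : ConvexOn ℝ univ (profile w i) :=
  hw.2.2.comp_linearMap (LinearMap.single ℝ (fun _ => ℝ) i)

theorem monotone_profile (hw : IsCWF w) (i : Fin n) : Monotone (profile w i) := by
  refine fun a b hab => hw.1 _ _ fun j => ?_
  by_cases h : j = i
  · subst h; simpa
  · simp [h]

theorem antitone_profile_sub_id (hw : IsCWF w) (i : Fin n) :
    Antitone fun t => profile w i t - t := by
  intro a b hab
  have hle : Pi.single i b ≤ Pi.single i a + fun _ => b - a := fun j => by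
    by_cases h : j = i
    · subst h; simp
    · simpa [h] using hab
  have := (hw.1 _ _ hle).trans_eq (hw.2.1 _ _)
  simp only [profile] at this ⊢
  linarith

theorem differentiable_profile (hdiff : Differentiable ℝ w) (i : Fin n) :
    Differentiable ℝ (profile w i) :=
  hdiff.comp (ContinuousLinearMap.single ℝ (fun _ => ℝ) i).differentiable

theorem deriv_profile_mem_Icc (hw : IsCWF w) (hdiff : Differentiable ℝ w) (i : Fin n) (t : ℝ) :
    deriv (profile w i) t ∈ Icc 0 1 := by
  refine ⟨(hw.monotone_profile i).deriv_nonneg, ?_⟩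
  have := (hw.antitone_profile_sub_id i).deriv_nonpos (x := t)
  rw [deriv_fun_sub (differentiable_profile hdiff i t) differentiableAt_fun_id, deriv_id''] at this
  linarith

theorem integral_hinge_quantileLaw (hw : IsCWF w) (hdiff : Differentiable ℝ w) (i : Fin n)
    (t : ℝ) :
    ∫ x, hinge t x ∂quantileLaw (deriv (profile w i)) = profile w i t - profile w i 0 := by
  have hg := differentiable_profile hdiff i
  have hmono : Monotone (deriv (profile w i)) :=
    monotoneOn_univ.1 ((hw.convexOn_profile i).monotoneOn_deriv fun x _ => hg x)
  have hc := (hw.convexOn_profile i).continuous_deriv hg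
  have hF := hw.deriv_profile_mem_Icc hdiff i
  refine integral_hinge_eq_sub hg (quantileLaw_singleton hmono hc) (fun s => ?_) t
  rw [measureReal_def, quantileLaw_Iio hmono hc (hF s).2, ENNReal.toReal_ofReal (hF s).1]

end IsCWF

theorem IsCWF.apply_eq_profile {w : (Fin 2 → ℝ) → ℝ} (hw : IsCWF w) (μ : Fin 2 → ℝ) :
    w μ = μ 1 + profile w 0 (μ 0 - μ 1) := by
  have : μ = Pi.single 0 (μ 0 - μ 1) + fun _ => μ 1 := by
    ext i; fin_cases i <;> simp
  rw [add_comm, profile, ← hw.2.1, ← this]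

theorem IsCWF.eq_integral_hinge {w : (Fin 2 → ℝ) → ℝ} (hw : IsCWF w) (hdiff : Differentiable ℝ w)
    (μ : Fin 2 → ℝ) :
    w μ = ∫ x, (μ 1 + profile w 0 0 + hinge (μ 0 - μ 1) x) ∂quantileLaw (deriv (profile w 0)) := by
  rw [integral_add (integrable_const _) (integrable_hinge _), integral_const,
    hw.integral_hinge_quantileLaw hdiff, hw.apply_eq_profile μ]
  simp

theorem stmt_9 (w : (Fin 2 → ℝ) → ℝ) (hw : IsCWF w) (hdiff : Differentiable ℝ w) :
    (∃ θ : Measure (Fin 2 → EReal), IsProbabilityMeasure θ ∧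
      (∀ᵐ ε ∂θ, ε 0 ≠ ⊤ ∧ ε 1 ≠ ⊤ ∧ (ε 0 ≠ ⊥ ∨ ε 1 ≠ ⊥)) ∧
      ∀ μ : Fin 2 → ℝ,
        w μ = ∫ ε, (max ((μ 0 : EReal) + ε 0) ((μ 1 : EReal) + ε 1)).toReal ∂θ) ∧
    ((∃ b : Fin 2 → ℝ, ∀ (μ : Fin 2 → ℝ) (i : Fin 2), μ i + b i ≤ w μ) →
      ∃ θ : Measure (Fin 2 → ℝ), IsProbabilityMeasure θ ∧
        Integrable (fun ε : Fin 2 → ℝ => |ε 0|) θ ∧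
        Integrable (fun ε : Fin 2 → ℝ => |ε 1|) θ ∧
        ∀ μ : Fin 2 → ℝ, w μ = ∫ ε, max (μ 0 + ε 0) (μ 1 + ε 1) ∂θ) := by
  set g := profile w 0
  have hrep : ∀ t, ∫ x, hinge t x ∂quantileLaw (deriv g) = g t - g 0 :=
    hw.integral_hinge_quantileLaw hdiff 0
  refine ⟨exists_noise_of_eq_integral_hinge (hw.eq_integral_hinge hdiff), fun ⟨b, hb⟩ => ?_⟩
  have hpos : ∫⁻ x, x.toENNReal ∂quantileLaw (deriv g) ≠ ⊤ :=
    (lintegral_toENNReal_le (C := g 0 - b 0) fun t => by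
      have : t + b 0 ≤ g t := by simpa [g, profile] using hb (Pi.single 0 t) 0
      rw [hrep]; linarith).trans_lt ENNReal.ofReal_lt_top |>.ne
  have hneg : ∫⁻ x, (-x).toENNReal ∂quantileLaw (deriv g) ≠ ⊤ :=
    (lintegral_neg_toENNReal_le (C := g 0 - b 1) fun t => by
      have : b 1 ≤ g t := by simpa [g, profile] using hb (Pi.single 0 t) 1
      rw [hrep]; linarith).trans_lt ENNReal.ofReal_lt_top |>.ne
  exact exists_realNoise_of_eq_integral_hinge (hw.eq_integral_hinge hdiff)
    (ae_coe_toReal_eq_of_lintegral_ne_top hpos hneg)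
    (integrable_toReal_of_lintegral_ne_top hpos hneg)
end
end

section
/- Let θ be a Borel probability measure on ℝⁿ that is absolutely continuous with respect to Lebesgue measure and satisfies E_θ[max_i |ε_i|] < ∞. Define w(μ) = E_θ[max_{i ∈ {1,…,n}} (μ_i + ε_i)] and q_i(μ) = θ({ε : μ_i + ε_i > μ_k + ε_k for all k ≠ i}). Then w is a differentiable choice welfare function (monotone, translation invariant, convex, differentiable) and ∇w(μ) = q(μ) for all μ ∈ ℝⁿ. -/
/-!
For each fixed noise vector `ε`, the realised surplus `μ ↦ maxᵢ (μᵢ + εᵢ)` is monotone,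
translation equivariant, convex and 1-Lipschitz, and these properties pass to its expectation.
Since `θ` has a density, ties `μᵢ + εᵢ = μₖ + εₖ` (a hyperplane in `ε`) occur with probability
zero; off the ties a single alternative `i` wins strictly in a neighbourhood of `μ`, where the
surplus is the affine map `μ ↦ μᵢ + εᵢ` with derivative the `i`-th coordinate projection.
Differentiating under the integral sign (dominated by the Lipschitz constant `1`) gives
`∇w(μ) = Σᵢ θ(i wins) eᵢ = q(μ)`.
-/

open scoped BigOperators
open MeasureTheory

noncomputable section

namespace RandomUtility

variable {ι : Type*}

def choiceRegion (μ : ι → ℝ) (i : ι) : Set (ι → ℝ) :=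
  {ε | ∀ k, k ≠ i → μ k + ε k < μ i + ε i}

theorem eq_of_mem_choiceRegion {μ ε : ι → ℝ} {i j : ι} (hi : ε ∈ choiceRegion μ i)
    (hj : ε ∈ choiceRegion μ j) : i = j := by
  by_contra hij
  exact (hi j (Ne.symm hij)).asymm (hj i hij)

variable [Fintype ι]

section Surplus

variable [Nonempty ι]

theorem lipschitzWith_iSup_add (ε : ι → ℝ) :
    LipschitzWith 1 fun μ : ι → ℝ => ⨆ i, μ i + ε i := by
  refine LipschitzWith.of_le_add fun μ ν => ciSup_le fun i => ?_
  have hμν : μ i - ν i ≤ dist μ ν :=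
    (le_abs_self _).trans ((Real.dist_eq _ _).symm.trans_le (dist_le_pi_dist μ ν i))
  have hν := le_ciSup (Finite.bddAbove_range fun j => ν j + ε j) i
  linarith

theorem abs_iSup_add_le (μ ε : ι → ℝ) : |⨆ i, μ i + ε i| ≤ ‖μ‖ + ⨆ i, |ε i| := by
  have hμ : ∀ i, |μ i| ≤ ‖μ‖ := fun i => norm_le_pi_norm μ i
  have hε : ∀ i, |ε i| ≤ ⨆ j, |ε j| := le_ciSup (Finite.bddAbove_range _)
  refine abs_le.2 ⟨?_, ciSup_le fun i => ?_⟩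
  · obtain ⟨i⟩ := ‹Nonempty ι›
    have := le_ciSup (Finite.bddAbove_range fun j => μ j + ε j) i
    linarith [neg_abs_le (μ i), neg_abs_le (ε i), hμ i, hε i]
  · linarith [le_abs_self (μ i), le_abs_self (ε i), hμ i, hε i]

theorem convexOn_iSup_add (ε : ι → ℝ) :
    ConvexOn ℝ Set.univ fun μ : ι → ℝ => ⨆ i, μ i + ε i := by
  refine ⟨convex_univ, fun μ _ ν _ a b ha hb hab => ciSup_le fun i => ?_⟩
  have hμ := le_ciSup (Finite.bddAbove_range fun j => μ j + ε j) i
  have hν := le_ciSup (Finite.bddAbove_range fun j => ν j + ε j) i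
  calc (a • μ + b • ν) i + ε i = a * (μ i + ε i) + b * (ν i + ε i) := by
        simp only [Pi.add_apply, Pi.smul_apply, smul_eq_mul]
        linear_combination (-ε i) * hab
    _ ≤ a • (⨆ j, μ j + ε j) + b • ⨆ j, ν j + ε j :=
        add_le_add (mul_le_mul_of_nonneg_left hμ ha) (mul_le_mul_of_nonneg_left hν hb)

end Surplus

theorem measurableSet_choiceRegion (μ : ι → ℝ) (i : ι) : MeasurableSet (choiceRegion μ i) := by
  simp only [choiceRegion, Set.ofPred_forall]
  exact .iInter fun k => .iInter fun _ => measurableSet_lt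
    ((measurable_pi_apply k).const_add _) ((measurable_pi_apply i).const_add _)

theorem exists_mem_choiceRegion [Nonempty ι] {μ ε : ι → ℝ}
    (h : Function.Injective fun i => μ i + ε i) : ∃ i, ε ∈ choiceRegion μ i := by
  obtain ⟨i, hi⟩ := Finite.exists_max fun i => μ i + ε i
  exact ⟨i, fun k hk => (hi k).lt_of_ne fun h' => hk (h h')⟩

theorem iSup_add_eq_of_mem_choiceRegion [Nonempty ι] {μ ε : ι → ℝ} {i : ι}
    (h : ε ∈ choiceRegion μ i) : ⨆ j, μ j + ε j = μ i + ε i :=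
  le_antisymm
    (ciSup_le fun j => (eq_or_ne j i).elim (fun hj => hj ▸ le_rfl) fun hj => (h j hj).le)
    (le_ciSup (Finite.bddAbove_range fun j => μ j + ε j) i)

theorem isOpen_setOf_mem_choiceRegion (ε : ι → ℝ) (i : ι) :
    IsOpen {μ : ι → ℝ | ε ∈ choiceRegion μ i} := by
  have hset : {μ : ι → ℝ | ε ∈ choiceRegion μ i} =
      ⋂ k, ⋂ (_ : k ≠ i), {μ | μ k + ε k < μ i + ε i} := by
    ext; simp [choiceRegion]
  rw [hset]
  exact isOpen_iInter_of_finite fun k => isOpen_iInter_of_finite fun _ =>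
    isOpen_lt (by fun_prop) (by fun_prop)

theorem hasFDerivAt_iSup_add_of_mem_choiceRegion [Nonempty ι] {μ₀ ε : ι → ℝ} {i : ι}
    (h : ε ∈ choiceRegion μ₀ i) :
    HasFDerivAt (fun μ : ι → ℝ => ⨆ j, μ j + ε j)
      (ContinuousLinearMap.proj i : (ι → ℝ) →L[ℝ] ℝ) μ₀ := by
  have hloc : (fun μ : ι → ℝ => ⨆ j, μ j + ε j) =ᶠ[nhds μ₀] fun μ => μ i + ε i :=
    Filter.eventually_of_mem ((isOpen_setOf_mem_choiceRegion ε i).mem_nhds h)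
      fun _ => iSup_add_eq_of_mem_choiceRegion
  exact ((ContinuousLinearMap.proj (R := ℝ) (φ := fun _ : ι => ℝ) i).hasFDerivAt.add_const
    (ε i)).congr_of_eventuallyEq hloc

theorem volume_setOf_add_eq_add (μ : ι → ℝ) {i k : ι} (hik : i ≠ k) :
    volume {ε : ι → ℝ | μ i + ε i = μ k + ε k} = 0 := by
  classical
  let diagonal := LinearMap.eqLocus (LinearMap.proj (R := ℝ) (φ := fun _ : ι => ℝ) i)
    (LinearMap.proj k)
  have hset : {ε : ι → ℝ | μ i + ε i = μ k + ε k} = (· + μ) ⁻¹' diagonal := by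
    ext ε
    simp [diagonal, LinearMap.mem_eqLocus, add_comm]
  rw [hset, measure_preimage_add_right]
  refine Measure.addHaar_submodule _ _ fun htop => ?_
  have : Pi.single (M := fun _ : ι => ℝ) i 1 ∈ diagonal := htop ▸ Submodule.mem_top
  simp [diagonal, LinearMap.mem_eqLocus, Pi.single_eq_of_ne hik.symm] at this

theorem ae_injective_add {θ : Measure (ι → ℝ)} (hac : θ ≪ volume) (μ : ι → ℝ) :
    ∀ᵐ ε ∂θ, Function.Injective fun i => μ i + ε i := by
  have hties : {ε : ι → ℝ | ¬Function.Injective fun i => μ i + ε i} ⊆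
      ⋃ i, ⋃ k, ⋃ (_ : i ≠ k), {ε | μ i + ε i = μ k + ε k} := by
    intro ε hε
    simp only [Function.Injective, not_forall] at hε
    obtain ⟨i, k, heq, hik⟩ := hε
    exact Set.mem_iUnion₂.2 ⟨i, k, Set.mem_iUnion.2 ⟨hik, heq⟩⟩
  exact measure_mono_null hties (hac (measure_iUnion_null fun i => measure_iUnion_null fun k =>
    measure_iUnion_null fun hik => volume_setOf_add_eq_add μ hik))

/-- For `ε ∈ choiceRegion μ i` this is the derivative of `μ ↦ maxⱼ (μⱼ + εⱼ)` at `μ`; on the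
null set of ties it is `0`. -/
def choiceGradient (μ ε : ι → ℝ) : (ι → ℝ) →L[ℝ] ℝ :=
  ∑ i, (choiceRegion μ i).indicator (1 : (ι → ℝ) → ℝ) ε • ContinuousLinearMap.proj i

theorem choiceGradient_eq_proj {μ ε : ι → ℝ} {i : ι} (hi : ε ∈ choiceRegion μ i) :
    choiceGradient μ ε = ContinuousLinearMap.proj i := by
  rw [choiceGradient, Finset.sum_eq_single i (fun j _ hji => by
      rw [Set.indicator_of_notMem fun hj => hji (eq_of_mem_choiceRegion hj hi), zero_smul])
    (fun h => absurd (Finset.mem_univ i) h), Set.indicator_of_mem hi, Pi.one_apply, one_smul]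

section Gradient

variable {θ : Measure (ι → ℝ)} [IsFiniteMeasure θ]

theorem integrable_indicator_choiceRegion_smul_proj (μ : ι → ℝ) (i : ι) :
    Integrable (fun ε => (choiceRegion μ i).indicator (1 : (ι → ℝ) → ℝ) ε •
      (ContinuousLinearMap.proj i : (ι → ℝ) →L[ℝ] ℝ)) θ :=
  ((integrable_const 1).indicator (measurableSet_choiceRegion μ i)).smul_const _

theorem integrable_choiceGradient (μ : ι → ℝ) : Integrable (choiceGradient μ) θ := by
  unfold choiceGradient
  exact integrable_finsetSum (ε' := (ι → ℝ) →L[ℝ] ℝ) _ fun i _ =>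
    integrable_indicator_choiceRegion_smul_proj μ i

theorem integral_choiceGradient (μ : ι → ℝ) :
    ∫ ε, choiceGradient μ ε ∂θ =
      ∑ i, θ.real (choiceRegion μ i) • (ContinuousLinearMap.proj i : (ι → ℝ) →L[ℝ] ℝ) := by
  unfold choiceGradient
  rw [integral_finsetSum _ fun i _ =>
    integrable_indicator_choiceRegion_smul_proj μ i]
  refine Finset.sum_congr rfl fun i _ => ?_
  rw [integral_smul_const, integral_indicator_one (measurableSet_choiceRegion μ i)]

end Gradient

def expectedMaxUtility (θ : Measure (ι → ℝ)) (μ : ι → ℝ) : ℝ :=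
  ∫ ε, ⨆ i, μ i + ε i ∂θ

variable [Nonempty ι] {θ : Measure (ι → ℝ)}

theorem integrable_iSup_add [IsFiniteMeasure θ]
    (hint : Integrable (fun ε : ι → ℝ => ⨆ i, |ε i|) θ) (μ : ι → ℝ) :
    Integrable (fun ε : ι → ℝ => ⨆ i, μ i + ε i) θ := by
  refine ((integrable_const ‖μ‖).add hint).mono
    (Measurable.iSup fun i => (measurable_pi_apply i).const_add (μ i)).aestronglyMeasurable
    (.of_forall fun ε => ?_)
  rw [Real.norm_eq_abs, Real.norm_eq_abs]
  exact (abs_iSup_add_le μ ε).trans (le_abs_self _)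

theorem monotone_expectedMaxUtility [IsFiniteMeasure θ]
    (hint : Integrable (fun ε : ι → ℝ => ⨆ i, |ε i|) θ) : Monotone (expectedMaxUtility θ) :=
  fun μ ν h => integral_mono (integrable_iSup_add hint μ) (integrable_iSup_add hint ν) fun _ =>
    ciSup_mono (Finite.bddAbove_range _) fun i => add_le_add_left (h i) _

theorem convexOn_expectedMaxUtility [IsFiniteMeasure θ]
    (hint : Integrable (fun ε : ι → ℝ => ⨆ i, |ε i|) θ) :
    ConvexOn ℝ Set.univ (expectedMaxUtility θ) :=
  integral_convexOn_of_integrand_ae convex_univ (.of_forall convexOn_iSup_add)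
    fun μ _ => integrable_iSup_add hint μ

theorem expectedMaxUtility_add_const [IsProbabilityMeasure θ]
    (hint : Integrable (fun ε : ι → ℝ => ⨆ i, |ε i|) θ) (μ : ι → ℝ) (t : ℝ) :
    expectedMaxUtility θ (μ + fun _ => t) = expectedMaxUtility θ μ + t := by
  have hshift : ∀ ε : ι → ℝ,
      ⨆ i, (μ + fun _ => t : ι → ℝ) i + ε i = (⨆ i, μ i + ε i) + t := fun ε => by
    rw [ciSup_add (Finite.bddAbove_range _)]
    exact iSup_congr fun i => by simp only [Pi.add_apply]; ring
  simp only [expectedMaxUtility, hshift]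
  rw [integral_add (integrable_iSup_add hint μ) (integrable_const t), integral_const,
    probReal_univ, one_smul]

theorem hasFDerivAt_expectedMaxUtility [IsFiniteMeasure θ]
    (hint : Integrable (fun ε : ι → ℝ => ⨆ i, |ε i|) θ) (hac : θ ≪ volume) (μ₀ : ι → ℝ) :
    HasFDerivAt (expectedMaxUtility θ)
      (∑ i, θ.real (choiceRegion μ₀ i) • (ContinuousLinearMap.proj i : (ι → ℝ) →L[ℝ] ℝ)) μ₀ := by
  have hdiff : ∀ᵐ ε ∂θ,
      HasFDerivAt (fun μ : ι → ℝ => ⨆ j, μ j + ε j) (choiceGradient μ₀ ε) μ₀ := by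
    filter_upwards [ae_injective_add hac μ₀] with ε hε
    obtain ⟨i, hi⟩ := exists_mem_choiceRegion hε
    exact choiceGradient_eq_proj hi ▸ hasFDerivAt_iSup_add_of_mem_choiceRegion hi
  have hmain := hasFDerivAt_integral_of_dominated_loc_of_lip (bound := fun _ => (1 : ℝ))
    Filter.univ_mem (.of_forall fun μ => (integrable_iSup_add hint μ).aestronglyMeasurable)
    (integrable_iSup_add hint μ₀) (integrable_choiceGradient μ₀).aestronglyMeasurable
    (.of_forall fun ε => by simpa using lipschitzWith_iSup_add ε)
    (integrable_const 1) hdiff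
  rw [← integral_choiceGradient]
  exact hmain.2

end RandomUtility

open RandomUtility in
theorem stmt_10 (n : ℕ) (hn : 0 < n) (θ : Measure (Fin n → ℝ))
    [IsProbabilityMeasure θ] (hac : θ ≪ volume)
    (hint : Integrable (fun ε : Fin n → ℝ => ⨆ i, |ε i|) θ)
    (w : (Fin n → ℝ) → ℝ) (q : (Fin n → ℝ) → Fin n → ℝ)
    (hw : ∀ μ : Fin n → ℝ, w μ = ∫ ε, (⨆ i, μ i + ε i) ∂θ)
    (hq : ∀ (μ : Fin n → ℝ) (i : Fin n),
      q μ i = (θ {ε | ∀ k, k ≠ i → μ k + ε k < μ i + ε i}).toReal) :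
    IsCWF w ∧ Differentiable ℝ w ∧ ∀ μ : Fin n → ℝ, grad w μ = q μ := by
  have : Nonempty (Fin n) := Fin.pos_iff_nonempty.mp hn
  obtain rfl : w = expectedMaxUtility θ := funext hw
  have hderiv μ := hasFDerivAt_expectedMaxUtility hint hac μ
  refine ⟨⟨fun _ _ h => monotone_expectedMaxUtility hint h, expectedMaxUtility_add_const hint,
      convexOn_expectedMaxUtility hint⟩,
    fun μ => (hderiv μ).differentiableAt, fun μ => funext fun j => ?_⟩
  rw [grad, (hderiv μ).fderiv, hq]
  simp [Pi.single_apply, choiceRegion, measureReal_def]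
end
end

section
/- Let w : ℝⁿ → ℝ be a differentiable choice welfare function (monotone, translation invariant, convex) and set q(μ) = ∇w(μ). Then q is a substitutable choice model (for all i ≠ j, all μ, and all t > 0, q_j(μ + t·e_i) ≤ q_j(μ)) if and only if w is submodular, i.e., w(x∨y) + w(x∧y) ≤ w(x) + w(y) for all x, y ∈ ℝⁿ, where ∨ and ∧ denote componentwise maximum and minimum. -/
open scoped BigOperators
open MeasureTheory

noncomputable section

/-!
Write `x = m + a` and `y = m + b` with `m = x ⊓ y`, where `a, b ≥ 0` have disjoint supports, so
that `x ⊔ y = m + a + b`. If every partial derivative `∂ⱼw` decreases in the other coordinates,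
then `t ↦ w (m + b + t • a) - w (m + t • a)` has derivative
`∑ᵢ aᵢ (∂ᵢw (m + t • a + b) - ∂ᵢw (m + t • a)) ≤ 0`, because `b` vanishes wherever `a` does not;
comparing `t = 1` with `t = 0` is submodularity. Conversely, submodularity applied to moves along
two distinct coordinates `i ≠ j` makes `s ↦ w (μ + t • eᵢ + s • eⱼ) - w (μ + s • eⱼ)` antitone,
and its derivative at `0` is `∂ⱼw (μ + t • eᵢ) - ∂ⱼw μ`.
-/

lemma submodular_of_forall_inf_eq_zero {α : Type*} [Lattice α] [AddCommGroup α]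
    [IsOrderedAddMonoid α] {w : α → ℝ}
    (h : ∀ m a b : α, 0 ≤ a → 0 ≤ b → a ⊓ b = 0 → w (m + a + b) + w m ≤ w (m + a) + w (m + b))
    (x y : α) : w (x ⊔ y) + w (x ⊓ y) ≤ w x + w y := by
  have hsup : x ⊔ y = x ⊓ y + (x - x ⊓ y) + (y - x ⊓ y) := by
    rw [eq_sub_of_add_eq' (inf_add_sup x y)]; abel
  have key := h (x ⊓ y) (x - x ⊓ y) (y - x ⊓ y) (sub_nonneg.2 inf_le_left)
    (sub_nonneg.2 inf_le_right) (by rw [← inf_sub, sub_self])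
  rwa [← hsup, add_sub_cancel, add_sub_cancel] at key

lemma Differentiable.hasDerivAt_apply_add_smul {E F : Type*} [NormedAddCommGroup E]
    [NormedSpace ℝ E] [NormedAddCommGroup F] [NormedSpace ℝ F] {w : E → F}
    (hw : Differentiable ℝ w) (μ v : E) (t : ℝ) :
    HasDerivAt (fun s : ℝ => w (μ + s • v)) (fderiv ℝ w (μ + t • v) v) t :=
  (hw _).hasFDerivAt.comp_hasDerivAt t
    ((((hasDerivAt_id t).smul_const v).const_add μ).congr_deriv (one_smul ℝ v))

section

variable {ι : Type*} [DecidableEq ι]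

lemma antitone_sub_of_submodular {w : (ι → ℝ) → ℝ}
    (hsm : ∀ x y : ι → ℝ, w (x ⊔ y) + w (x ⊓ y) ≤ w x + w y) {i j : ι} (hij : i ≠ j)
    (μ : ι → ℝ) {t : ℝ} (ht : 0 ≤ t) :
    Antitone fun s : ℝ =>
      w (μ + t • Pi.single i 1 + s • Pi.single j 1) - w (μ + s • Pi.single j 1) := by
  intro s₁ s₂ hs
  have key := hsm (μ + t • Pi.single i 1 + s₁ • Pi.single j 1) (μ + s₂ • Pi.single j 1)
  have hsup : (μ + t • Pi.single i 1 + s₁ • Pi.single j 1) ⊔ (μ + s₂ • Pi.single j 1) =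
      μ + t • Pi.single i 1 + s₂ • Pi.single j 1 := by
    ext k
    rcases eq_or_ne k i with rfl | hki <;> rcases eq_or_ne k j with rfl | hkj <;> simp_all
  have hinf : (μ + t • Pi.single i 1 + s₁ • Pi.single j 1) ⊓ (μ + s₂ • Pi.single j 1) =
      μ + s₁ • Pi.single j 1 := by
    ext k
    rcases eq_or_ne k i with rfl | hki <;> rcases eq_or_ne k j with rfl | hkj <;> simp_all
  rw [hsup, hinf] at key
  linarith

variable [Fintype ι]

lemma fderiv_single_le_of_submodular {w : (ι → ℝ) → ℝ} (hdiff : Differentiable ℝ w)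
    (hsm : ∀ x y : ι → ℝ, w (x ⊔ y) + w (x ⊓ y) ≤ w x + w y) {i j : ι} (hij : i ≠ j)
    (μ : ι → ℝ) {t : ℝ} (ht : 0 ≤ t) :
    fderiv ℝ w (μ + t • Pi.single i 1) (Pi.single j 1) ≤ fderiv ℝ w μ (Pi.single j 1) := by
  have hderiv :=
    (hdiff.hasDerivAt_apply_add_smul (μ + t • Pi.single i 1) (Pi.single j 1) 0).fun_sub
      (hdiff.hasDerivAt_apply_add_smul μ (Pi.single j 1) 0)
  simp only [zero_smul, add_zero] at hderiv
  have hnonpos := (antitone_sub_of_submodular hsm hij μ ht).deriv_nonpos (x := 0)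
  rw [hderiv.deriv] at hnonpos
  linarith

lemma ContinuousLinearMap.apply_eq_sum_mul_single (L : (ι → ℝ) →L[ℝ] ℝ) (v : ι → ℝ) :
    L v = ∑ i, v i * L (Pi.single i 1) := by
  conv_lhs => rw [← Finset.univ_sum_single v]
  simp only [map_sum]
  congr! 1 with i
  rw [← smul_eq_mul, ← map_smul, ← Pi.single_smul', smul_eq_mul, mul_one]

lemma le_of_forall_add_smul_single_le {F : (ι → ℝ) → ℝ} {p : ι → Prop}
    (hF : ∀ i, p i → ∀ μ (t : ℝ), 0 < t → F (μ + t • Pi.single i 1) ≤ F μ)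
    (μ : ι → ℝ) {v : ι → ℝ} (hv : 0 ≤ v) (hvp : ∀ i, v i ≠ 0 → p i) :
    F (μ + v) ≤ F μ := by
  have key : ∀ S : Finset ι, F (μ + ∑ i ∈ S, v i • Pi.single i 1) ≤ F μ := by
    intro S
    induction S using Finset.induction_on with
    | empty => simp
    | insert i S hi ih =>
      rw [Finset.sum_insert hi, ← add_assoc, add_right_comm]
      rcases (hv i).eq_or_lt with hvi | hvi
      · simpa [← hvi] using ih
      · exact (hF i (hvp i hvi.ne') _ _ hvi).trans ih
  simpa [← Pi.single_smul', Finset.univ_sum_single] using key Finset.univ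

lemma fderiv_add_apply_le {w : (ι → ℝ) → ℝ}
    (hsub : ∀ i j : ι, i ≠ j → ∀ μ (t : ℝ), 0 < t →
      fderiv ℝ w (μ + t • Pi.single i 1) (Pi.single j 1) ≤ fderiv ℝ w μ (Pi.single j 1))
    (μ : ι → ℝ) {a b : ι → ℝ} (ha : 0 ≤ a) (hb : 0 ≤ b) (hab : a ⊓ b = 0) :
    fderiv ℝ w (μ + b) a ≤ fderiv ℝ w μ a := by
  rw [ContinuousLinearMap.apply_eq_sum_mul_single _ a,
    ContinuousLinearMap.apply_eq_sum_mul_single (fderiv ℝ w μ) a]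
  refine Finset.sum_le_sum fun j _ => ?_
  rcases (ha j).eq_or_lt with haj | haj
  · simp [← haj]
  have hbj : b j = 0 := by
    rcases min_eq_iff.1 (congrFun hab j) with h | h
    exacts [absurd h.1 haj.ne', h.1]
  have hpartial : fderiv ℝ w (μ + b) (Pi.single j 1) ≤ fderiv ℝ w μ (Pi.single j 1) :=
    le_of_forall_add_smul_single_le (F := fun μ => fderiv ℝ w μ (Pi.single j 1))
      (fun i hij => hsub i j hij) μ hb fun i hbi hij => hbi (hij ▸ hbj)
  exact mul_le_mul_of_nonneg_left hpartial haj.le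

lemma add_add_le_of_fderiv_antitone {w : (ι → ℝ) → ℝ} (hdiff : Differentiable ℝ w)
    (hsub : ∀ i j : ι, i ≠ j → ∀ μ (t : ℝ), 0 < t →
      fderiv ℝ w (μ + t • Pi.single i 1) (Pi.single j 1) ≤ fderiv ℝ w μ (Pi.single j 1))
    (m : ι → ℝ) {a b : ι → ℝ} (ha : 0 ≤ a) (hb : 0 ≤ b) (hab : a ⊓ b = 0) :
    w (m + a + b) + w m ≤ w (m + a) + w (m + b) := by
  have hanti : Antitone fun t : ℝ => w (m + b + t • a) - w (m + t • a) := by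
    refine antitone_of_hasDerivAt_nonpos (fun t =>
      (hdiff.hasDerivAt_apply_add_smul (m + b) a t).fun_sub
        (hdiff.hasDerivAt_apply_add_smul m a t)) fun t => ?_
    rw [Pi.zero_apply, sub_nonpos, add_right_comm]
    exact fderiv_add_apply_le hsub _ ha hb hab
  have h10 := hanti zero_le_one
  simp only [one_smul, zero_smul, add_zero] at h10
  rw [add_right_comm] at h10
  linarith

end

theorem stmt_13_general (n : ℕ) (w : (Fin n → ℝ) → ℝ)
    (hdiff : Differentiable ℝ w) :
    (∀ i j : Fin n, i ≠ j → ∀ (μ : Fin n → ℝ) (t : ℝ), 0 < t →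
      grad w (μ + t • (Pi.single i 1 : Fin n → ℝ)) j ≤ grad w μ j) ↔
    (∀ x y : Fin n → ℝ, w (x ⊔ y) + w (x ⊓ y) ≤ w x + w y) :=
  ⟨fun hsub => submodular_of_forall_inf_eq_zero fun m _ _ ha hb hab =>
      add_add_le_of_fderiv_antitone hdiff hsub m ha hb hab,
    fun hsm _ _ hij μ _ ht => fderiv_single_le_of_submodular hdiff hsm hij μ ht.le⟩

theorem stmt_13 (n : ℕ) (w : (Fin n → ℝ) → ℝ)
    (hw : IsCWF w) (hdiff : Differentiable ℝ w) :
    (∀ i j : Fin n, i ≠ j → ∀ (μ : Fin n → ℝ) (t : ℝ), 0 < t →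
      grad w (μ + t • (Pi.single i 1 : Fin n → ℝ)) j ≤ grad w μ j) ↔
    (∀ x y : Fin n → ℝ, w (x ⊔ y) + w (x ⊓ y) ≤ w x + w y) :=
  stmt_13_general n w hdiff
end
end

section
/- Let n = 3 and let V : ℝ³ → ℝ ∪ {+∞} be a proper lower semicontinuous convex function with V(x) = +∞ for x outside the simplex Δ₂, which is essentially strictly convex (strictly convex on every convex subset of {x : ∂V(x) ≠ ∅}). Suppose that for each i ∈ {1, 2, 3}, the function V̄_i : ℝ² → ℝ ∪ {+∞} defined by V̄_i(z) = V(z₁,…,z_{i−1}, 1 − z₁ − z₂, z_i,…,z₂) for z ≥ 0 with z₁ + z₂ ≤ 1 and +∞ otherwise, is supermodular on ℝ². Then the choice model q(μ) = argmax_{x ∈ Δ₂} { μᵀx − V(x) } is substitutable: for all i ≠ j, all μ ∈ ℝ³, and all t > 0, q_j(μ + t·e_i) ≤ q_j(μ). -/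
open scoped BigOperators
open MeasureTheory

noncomputable section

/-- d is a subgradient of V at x. -/
def ESubgradAt {n : ℕ} (V : (Fin n → ℝ) → EReal) (x d : Fin n → ℝ) : Prop :=
  ∀ y : Fin n → ℝ, V x + ((∑ i, d i * (y i - x i) : ℝ) : EReal) ≤ V y

/-- V̄ᵢ(z) = V(z₁,…,z_{i−1}, 1 − Σⱼ zⱼ, z_i,…,z_{n−1}) on the feasible region, +∞ outside. -/
def Vbar {n : ℕ} (V : (Fin (n + 1) → ℝ) → EReal) (i : Fin (n + 1))
    (z : Fin n → ℝ) : EReal :=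
  if (∀ j, 0 ≤ z j) ∧ ∑ j, z j ≤ 1 then V (i.insertNth (1 - ∑ j, z j) z) else ⊤

private lemma fin2_sum {pi pj : Fin 2} (h : pi ≠ pj) (g : Fin 2 → ℝ) :
    ∑ m, g m = g pi + g pj := by
  fin_cases pi <;> fin_cases pj <;> simp_all [Fin.sum_univ_two] <;> ring

private lemma fin2_cases {pi pj : Fin 2} (h : pi ≠ pj) (m : Fin 2) : m = pi ∨ m = pj := by
  fin_cases m <;> fin_cases pi <;> fin_cases pj <;> simp_all

private lemma dot_insertNth (ν : Fin 3 → ℝ) (k : Fin 3) (c : ℝ) (z : Fin 2 → ℝ) :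
    ∑ m, ν m * (k.insertNth c z : Fin 3 → ℝ) m
      = ν k * c + ∑ m : Fin 2, ν (k.succAbove m) * z m := by
  rw [Fin.sum_univ_succAbove (fun m => ν m * (k.insertNth c z : Fin 3 → ℝ) m) k]
  simp

theorem stmt_15 (V : (Fin 3 → ℝ) → EReal)
    (hproper : ∃ x, V x ≠ ⊤) (hnobot : ∀ x, V x ≠ ⊥)
    (hlsc : LowerSemicontinuous V)
    (hconv : ConvexE V)
    (hdom : ∀ x : Fin 3 → ℝ, x ∉ choiceSimplex 3 → V x = ⊤)
    (hesc : ∀ S : Set (Fin 3 → ℝ), S ⊆ {x | ∃ d, ESubgradAt V x d} → Convex ℝ S →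
      ∀ x ∈ S, ∀ y ∈ S, x ≠ y → ∀ a b : ℝ, 0 < a → 0 < b → a + b = 1 →
        V (a • x + b • y) < (a : EReal) * V x + (b : EReal) * V y)
    (hsup : ∀ i : Fin 3, ∀ z₁ z₂ : Fin 2 → ℝ,
      Vbar V i z₁ + Vbar V i z₂ ≤ Vbar V i (z₁ ⊔ z₂) + Vbar V i (z₁ ⊓ z₂))
    (q : (Fin 3 → ℝ) → Fin 3 → ℝ)
    (hq : ∀ μ : Fin 3 → ℝ, q μ ∈ choiceSimplex 3 ∧
      ∀ x ∈ choiceSimplex 3,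
        ((∑ i, μ i * x i : ℝ) : EReal) - V x ≤
          ((∑ i, μ i * q μ i : ℝ) : EReal) - V (q μ)) :
    ∀ i j : Fin 3, i ≠ j → ∀ (μ : Fin 3 → ℝ) (t : ℝ), 0 < t →
      q (μ + t • (Pi.single i 1 : Fin 3 → ℝ)) j ≤ q μ j := by
  intro i j hij μ t ht
  by_contra hcon
  push_neg at hcon
  set μ' : Fin 3 → ℝ := μ + t • (Pi.single i 1 : Fin 3 → ℝ) with hμ'def
  set x : Fin 3 → ℝ := q μ with hxdef
  set y : Fin 3 → ℝ := q μ' with hydef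
  -- basic facts
  obtain ⟨x₀, hx₀⟩ := hproper
  have hx₀s : x₀ ∈ choiceSimplex 3 := by
    by_contra h; exact hx₀ (hdom _ h)
  obtain ⟨v₀, hv₀⟩ : ∃ r : ℝ, V x₀ = (r : EReal) :=
    ⟨(V x₀).toReal, (EReal.coe_toReal hx₀ (hnobot x₀)).symm⟩
  -- V at maximizers is finite
  have hfin : ∀ ρ : Fin 3 → ℝ, ∃ r : ℝ, V (q ρ) = (r : EReal) := by
    intro ρ
    have h1 := (hq ρ).2 x₀ hx₀s
    have hne : V (q ρ) ≠ ⊤ := by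
      intro htop
      rw [htop] at h1
      simp only [EReal.sub_top] at h1
      rw [hv₀, ← EReal.coe_sub] at h1
      exact (EReal.bot_lt_coe _).not_ge h1
    exact ⟨(V (q ρ)).toReal, (EReal.coe_toReal hne (hnobot _)).symm⟩
  obtain ⟨vx, hvx⟩ := hfin μ
  obtain ⟨vy, hvy⟩ := hfin μ'
  rw [← hxdef] at hvx
  rw [← hydef] at hvy
  have hxs : x ∈ choiceSimplex 3 := (hq μ).1
  have hys : y ∈ choiceSimplex 3 := (hq μ').1
  -- dot product with μ'
  have hdotμ' : ∀ w : Fin 3 → ℝ, ∑ m, μ' m * w m = (∑ m, μ m * w m) + t * w i := by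
    intro w
    have : ∀ m, μ' m * w m = μ m * w m + (if m = i then t * w m else 0) := by
      intro m
      simp only [hμ'def, Pi.add_apply, Pi.smul_apply, Pi.single_apply, smul_eq_mul]
      by_cases h : m = i <;> simp [h] <;> ring
    rw [Finset.sum_congr rfl (fun m _ => this m), Finset.sum_add_distrib,
      Finset.sum_ite_eq' Finset.univ i (fun m => t * w m)]
    simp
  -- real optimality at μ
  have hoptμ : ∀ w ∈ choiceSimplex 3, ∀ vw : ℝ, V w = (vw : EReal) →
      (∑ m, μ m * w m) - vw ≤ (∑ m, μ m * x m) - vx := by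
    intro w hw vw hvw
    have := (hq μ).2 w hw
    rw [hvw, ← hxdef, hvx, ← EReal.coe_sub, ← EReal.coe_sub] at this
    exact_mod_cast this
  have hoptμ' : ∀ w ∈ choiceSimplex 3, ∀ vw : ℝ, V w = (vw : EReal) →
      (∑ m, μ' m * w m) - vw ≤ (∑ m, μ' m * y m) - vy := by
    intro w hw vw hvw
    have := (hq μ').2 w hw
    rw [hvw, ← hydef, hvy, ← EReal.coe_sub, ← EReal.coe_sub] at this
    exact_mod_cast this
  -- Step A : x i ≤ y i
  have hstepA : x i ≤ y i := by
    have e5 := hoptμ y hys vy hvy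
    have e6 := hoptμ' x hxs vx hvx
    rw [hdotμ' x, hdotμ' y] at e6
    have : t * x i ≤ t * y i := by linarith
    exact le_of_mul_le_mul_left this ht
  -- the third index
  obtain ⟨k, hki, hkj⟩ : ∃ k : Fin 3, k ≠ i ∧ k ≠ j := by
    fin_cases i <;> fin_cases j <;> first | (exact absurd rfl hij) | decide
  obtain ⟨pi, hpi⟩ : ∃ m : Fin 2, k.succAbove m = i := Fin.exists_succAbove_eq (Ne.symm hki)
  obtain ⟨pj, hpj⟩ : ∃ m : Fin 2, k.succAbove m = j := Fin.exists_succAbove_eq (Ne.symm hkj)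
  have hpij : pi ≠ pj := by
    intro h; rw [h, hpj] at hpi; exact hij hpi.symm
  -- reduced coordinates
  set zx : Fin 2 → ℝ := k.removeNth x with hzx
  set zy : Fin 2 → ℝ := k.removeNth y with hzy
  have hzxm : ∀ m, zx m = x (k.succAbove m) := fun m => rfl
  have hzym : ∀ m, zy m = y (k.succAbove m) := fun m => rfl
  set z₁ : Fin 2 → ℝ := fun m => if m = pi then zy m else zx m with hz₁
  set z₂ : Fin 2 → ℝ := fun m => if m = pi then zx m else zy m with hz₂
  have hz₁pi : z₁ pi = y i := by rw [hz₁]; simp [hzym, hpi]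
  have hz₁pj : z₁ pj = x j := by rw [hz₁]; simp [hpij.symm, hzxm, hpj]
  have hz₂pi : z₂ pi = x i := by rw [hz₂]; simp [hzxm, hpi]
  have hz₂pj : z₂ pj = y j := by rw [hz₂]; simp [hpij.symm, hzym, hpj]
  have hzxpi : zx pi = x i := by rw [hzxm, hpi]
  have hzxpj : zx pj = x j := by rw [hzxm, hpj]
  have hzypi : zy pi = y i := by rw [hzym, hpi]
  have hzypj : zy pj = y j := by rw [hzym, hpj]
  -- lattice identities
  have hsupz : z₁ ⊔ z₂ = zy := by
    funext m
    rcases fin2_cases hpij m with rfl | rfl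
    · show max (z₁ m) (z₂ m) = zy m
      rw [hz₁pi, hz₂pi, hzypi]
      exact max_eq_left hstepA
    · show max (z₁ m) (z₂ m) = zy m
      rw [hz₁pj, hz₂pj, hzypj]
      exact max_eq_right hcon.le
  have hinfz : z₁ ⊓ z₂ = zx := by
    funext m
    rcases fin2_cases hpij m with rfl | rfl
    · show min (z₁ m) (z₂ m) = zx m
      rw [hz₁pi, hz₂pi, hzxpi]
      exact min_eq_right hstepA
    · show min (z₁ m) (z₂ m) = zx m
      rw [hz₁pj, hz₂pj, hzxpj]
      exact min_eq_left hcon.le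
  -- Vbar values
  have hsumzy : ∑ m, zy m = 1 - y k := by
    have := hys.2
    rw [Fin.sum_univ_succAbove y k] at this
    have : ∑ m, zy m = 1 - y k := by
      simp only [hzym]; linarith [this]
    exact this
  have hsumzx : ∑ m, zx m = 1 - x k := by
    have := hxs.2
    rw [Fin.sum_univ_succAbove x k] at this
    simp only [hzxm]; linarith [this]
  have hVbarzy : Vbar V k zy = V y := by
    rw [Vbar, if_pos]
    · congr 1
      rw [hsumzy]
      have : (1 : ℝ) - (1 - y k) = y k := by ring
      rw [this]
      exact Fin.insertNth_self_removeNth (p := k) (f := y)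
    · constructor
      · intro m; rw [hzym]; exact hys.1 _
      · rw [hsumzy]; linarith [hys.1 k]
  have hVbarzx : Vbar V k zx = V x := by
    rw [Vbar, if_pos]
    · congr 1
      rw [hsumzx]
      have : (1 : ℝ) - (1 - x k) = x k := by ring
      rw [this]
      exact Fin.insertNth_self_removeNth (p := k) (f := x)
    · constructor
      · intro m; rw [hzxm]; exact hxs.1 _
      · rw [hsumzx]; linarith [hxs.1 k]
  -- sums of z₁, z₂
  have hsz₁ : ∑ m, z₁ m = y i + x j := by rw [fin2_sum hpij, hz₁pi, hz₁pj]
  have hsz₂ : ∑ m, z₂ m = x i + y j := by rw [fin2_sum hpij, hz₂pi, hz₂pj]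
  have hyij : y i + y j ≤ 1 := by
    have h2 := hys.2
    rw [Fin.sum_univ_succAbove y k] at h2
    have h3 : ∑ m : Fin 2, y (k.succAbove m) = y (k.succAbove pi) + y (k.succAbove pj) :=
      fin2_sum hpij _
    rw [h3, hpi, hpj] at h2
    linarith [hys.1 k]
  -- feasibility of z₁ and z₂
  have hz₁nn : ∀ m, 0 ≤ z₁ m := by
    intro m
    rcases fin2_cases hpij m with rfl | rfl
    · rw [hz₁pi]; exact hys.1 i
    · rw [hz₁pj]; exact hxs.1 j
  have hz₂nn : ∀ m, 0 ≤ z₂ m := by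
    intro m
    rcases fin2_cases hpij m with rfl | rfl
    · rw [hz₂pi]; exact hxs.1 i
    · rw [hz₂pj]; exact hys.1 j
  have hz₁le : ∑ m, z₁ m ≤ 1 := by rw [hsz₁]; linarith
  have hz₂le : ∑ m, z₂ m ≤ 1 := by rw [hsz₂]; linarith
  -- the exchange points
  set P : Fin 3 → ℝ := k.insertNth (1 - ∑ m, z₁ m) z₁ with hP
  set Q : Fin 3 → ℝ := k.insertNth (1 - ∑ m, z₂ m) z₂ with hQ
  have hVbarz₁ : Vbar V k z₁ = V P := by rw [Vbar, if_pos ⟨hz₁nn, hz₁le⟩]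
  have hVbarz₂ : Vbar V k z₂ = V Q := by rw [Vbar, if_pos ⟨hz₂nn, hz₂le⟩]
  have hPs : P ∈ choiceSimplex 3 := by
    constructor
    · intro l
      by_cases hl : l = k
      · subst hl
        rw [hP, Fin.insertNth_apply_same]
        linarith
      · obtain ⟨m, hm⟩ := Fin.exists_succAbove_eq hl
        rw [← hm, hP, Fin.insertNth_apply_succAbove]
        exact hz₁nn m
    · rw [Fin.sum_univ_succAbove P k, hP, Fin.insertNth_apply_same]
      have h4 : ∀ m : Fin 2, (k.insertNth (1 - ∑ m, z₁ m) z₁ : Fin 3 → ℝ) (k.succAbove m) = z₁ m :=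
        fun m => Fin.insertNth_apply_succAbove k _ _ m
      rw [Finset.sum_congr rfl (fun m _ => h4 m)]
      ring
  have hQs : Q ∈ choiceSimplex 3 := by
    constructor
    · intro l
      by_cases hl : l = k
      · subst hl
        rw [hQ, Fin.insertNth_apply_same]
        linarith
      · obtain ⟨m, hm⟩ := Fin.exists_succAbove_eq hl
        rw [← hm, hQ, Fin.insertNth_apply_succAbove]
        exact hz₂nn m
    · rw [Fin.sum_univ_succAbove Q k, hQ, Fin.insertNth_apply_same]
      have h4 : ∀ m : Fin 2, (k.insertNth (1 - ∑ m, z₂ m) z₂ : Fin 3 → ℝ) (k.succAbove m) = z₂ m :=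
        fun m => Fin.insertNth_apply_succAbove k _ _ m
      rw [Finset.sum_congr rfl (fun m _ => h4 m)]
      ring
  -- supermodularity gives finiteness and the key inequality
  have hsupk := hsup k z₁ z₂
  rw [hsupz, hinfz, hVbarzy, hVbarzx, hVbarz₁, hVbarz₂, hvy, hvx, ← EReal.coe_add] at hsupk
  have hVPtop : V P ≠ ⊤ := by
    intro htop
    rw [htop, EReal.top_add_of_ne_bot (hnobot Q)] at hsupk
    exact (EReal.coe_lt_top (vy + vx)).not_ge hsupk
  have hVQtop : V Q ≠ ⊤ := by
    intro htop
    rw [htop, add_comm (V P), EReal.top_add_of_ne_bot (hnobot P)] at hsupk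
    exact (EReal.coe_lt_top (vy + vx)).not_ge hsupk
  obtain ⟨vP, hvP⟩ : ∃ r : ℝ, V P = (r : EReal) :=
    ⟨(V P).toReal, (EReal.coe_toReal hVPtop (hnobot P)).symm⟩
  obtain ⟨vQ, hvQ⟩ : ∃ r : ℝ, V Q = (r : EReal) :=
    ⟨(V Q).toReal, (EReal.coe_toReal hVQtop (hnobot Q)).symm⟩
  have e3 : vP + vQ ≤ vy + vx := by
    rw [hvP, hvQ, ← EReal.coe_add] at hsupk
    exact_mod_cast hsupk
  -- dot products of P and Q
  have hdotP : ∀ ν : Fin 3 → ℝ, ∑ m, ν m * P m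
      = ν k * (1 - (y i + x j)) + ν i * y i + ν j * x j := by
    intro ν
    rw [hP, dot_insertNth, fin2_sum hpij (fun m => ν (k.succAbove m) * z₁ m)]
    rw [hpi, hpj, hz₁pi, hz₁pj, hsz₁]
    ring
  have hdotQ : ∀ ν : Fin 3 → ℝ, ∑ m, ν m * Q m
      = ν k * (1 - (x i + y j)) + ν i * x i + ν j * y j := by
    intro ν
    rw [hQ, dot_insertNth, fin2_sum hpij (fun m => ν (k.succAbove m) * z₂ m)]
    rw [hpi, hpj, hz₂pi, hz₂pj, hsz₂]
    ring
  have hdotx : ∀ ν : Fin 3 → ℝ, ∑ m, ν m * x m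
      = ν k * (1 - (x i + x j)) + ν i * x i + ν j * x j := by
    intro ν
    have hx' : x = k.insertNth (x k) zx := (Fin.insertNth_self_removeNth (p := k) (f := x)).symm
    calc ∑ m, ν m * x m = ∑ m, ν m * (k.insertNth (x k) zx : Fin 3 → ℝ) m := by rw [← hx']
    _ = ν k * x k + ∑ m : Fin 2, ν (k.succAbove m) * zx m := dot_insertNth ν k (x k) zx
    _ = ν k * (1 - (x i + x j)) + ν i * x i + ν j * x j := by
        rw [fin2_sum hpij (fun m => ν (k.succAbove m) * zx m), hpi, hpj, hzxpi, hzxpj]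
        have hxk : x k = 1 - (x i + x j) := by
          have h2 := hxs.2
          rw [Fin.sum_univ_succAbove x k,
            fin2_sum hpij (fun m => x (k.succAbove m)), hpi, hpj] at h2
          linarith
        rw [hxk]; ring
  have hdoty : ∀ ν : Fin 3 → ℝ, ∑ m, ν m * y m
      = ν k * (1 - (y i + y j)) + ν i * y i + ν j * y j := by
    intro ν
    have hy' : y = k.insertNth (y k) zy := (Fin.insertNth_self_removeNth (p := k) (f := y)).symm
    calc ∑ m, ν m * y m = ∑ m, ν m * (k.insertNth (y k) zy : Fin 3 → ℝ) m := by rw [← hy']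
    _ = ν k * y k + ∑ m : Fin 2, ν (k.succAbove m) * zy m := dot_insertNth ν k (y k) zy
    _ = ν k * (1 - (y i + y j)) + ν i * y i + ν j * y j := by
        rw [fin2_sum hpij (fun m => ν (k.succAbove m) * zy m), hpi, hpj, hzypi, hzypj]
        have hyk : y k = 1 - (y i + y j) := by
          have h2 := hys.2
          rw [Fin.sum_univ_succAbove y k,
            fin2_sum hpij (fun m => y (k.succAbove m)), hpi, hpj] at h2
          linarith
        rw [hyk]; ring
  -- P i and Q j
  have hPi : P i = y i := by
    have h5 : P (k.succAbove pi) = z₁ pi := Fin.insertNth_apply_succAbove k _ _ pi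
    rw [hpi] at h5
    rw [h5, hz₁pi]
  have hQj : Q j = y j := by
    have h5 : Q (k.succAbove pj) = z₂ pj := Fin.insertNth_apply_succAbove k _ _ pj
    rw [hpj] at h5
    rw [h5, hz₂pj]
  -- optimality inequalities
  have e1 : (∑ m, μ m * Q m) - vQ ≤ (∑ m, μ m * x m) - vx := hoptμ Q hQs vQ hvQ
  have e2 : (∑ m, μ' m * P m) - vP ≤ (∑ m, μ' m * y m) - vy := hoptμ' P hPs vP hvP
  -- the dot identity
  have e4 : (∑ m, μ m * Q m) + (∑ m, μ' m * P m) = (∑ m, μ m * x m) + (∑ m, μ' m * y m) := by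
    rw [hdotμ' P, hdotμ' y, hdotQ μ, hdotP μ, hdotx μ, hdoty μ, hPi]
    ring
  -- equality of objectives : Q is also a maximizer at μ
  have heq : (∑ m, μ m * Q m) - vQ = (∑ m, μ m * x m) - vx := by linarith
  have hxQ : x ≠ Q := by
    intro h
    rw [h, hQj] at hcon
    exact lt_irrefl _ hcon
  -- sum manipulation helpers
  have hsub3 : ∀ u w : Fin 3 → ℝ,
      ∑ m, μ m * (w m - u m) = (∑ m, μ m * w m) - (∑ m, μ m * u m) := by
    intro u w
    rw [← Finset.sum_sub_distrib]
    exact Finset.sum_congr rfl (fun m _ => by ring)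
  have hdotz : ∀ a b : ℝ, ∑ m, μ m * (a • x + b • Q) m
      = a * (∑ m, μ m * x m) + b * (∑ m, μ m * Q m) := by
    intro a b
    have h1 : ∀ m, μ m * (a • x + b • Q) m = a * (μ m * x m) + b * (μ m * Q m) := by
      intro m
      simp only [Pi.add_apply, Pi.smul_apply, smul_eq_mul]
      ring
    rw [Finset.sum_congr rfl (fun m _ => h1 m), Finset.sum_add_distrib,
      ← Finset.mul_sum, ← Finset.mul_sum]
  -- generic subgradient lemma at μ-maximizers
  have hsubgen : ∀ (z : Fin 3 → ℝ) (vz : ℝ), V z = (vz : EReal) →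
      (∀ w ∈ choiceSimplex 3,
        ((∑ m, μ m * w m : ℝ) : EReal) - V w ≤ (((∑ m, μ m * z m) - vz : ℝ) : EReal)) →
      ESubgradAt V z μ := by
    intro z vz hvz hmax w
    by_cases hw : w ∈ choiceSimplex 3
    · rcases eq_or_ne (V w) ⊤ with hwt | hwt
      · rw [hwt]; exact le_top
      · obtain ⟨vw, hvw⟩ : ∃ r : ℝ, V w = (r : EReal) :=
          ⟨(V w).toReal, (EReal.coe_toReal hwt (hnobot w)).symm⟩
        have h6 := hmax w hw
        rw [hvw, ← EReal.coe_sub] at h6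
        have h7 : (∑ m, μ m * w m) - vw ≤ (∑ m, μ m * z m) - vz := by exact_mod_cast h6
        rw [hvz, hvw, ← EReal.coe_add, EReal.coe_le_coe_iff, hsub3 z w]
        linarith
    · rw [hdom w hw]; exact le_top
  -- subgradient at x
  have hmaxx : ∀ w ∈ choiceSimplex 3,
      ((∑ m, μ m * w m : ℝ) : EReal) - V w ≤ (((∑ m, μ m * x m) - vx : ℝ) : EReal) := by
    intro w hw
    have h6 := (hq μ).2 w hw
    rw [← hxdef, hvx, ← EReal.coe_sub] at h6
    exact h6
  have hsubx : ESubgradAt V x μ := hsubgen x vx hvx hmaxx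
  -- subgradient at Q
  have hsubQ : ESubgradAt V Q μ := by
    refine hsubgen Q vQ hvQ ?_
    intro w hw
    have h6 := hmaxx w hw
    rw [← heq] at h6
    exact h6
  have kq : (∑ m, μ m * Q m) - (∑ m, μ m * x m) = vQ - vx := by linarith
  -- value of V along the segment [x, Q]
  have hval : ∀ a b : ℝ, 0 ≤ a → 0 ≤ b → a + b = 1 →
      V (a • x + b • Q) = ((a * vx + b * vQ : ℝ) : EReal) := by
    intro a b ha hb hab
    have hupper := hconv x Q a b ha hb hab
    rw [hvx, hvQ, ← EReal.coe_mul, ← EReal.coe_mul, ← EReal.coe_add] at hupper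
    have hlower := hsubx (a • x + b • Q)
    rw [hvx, ← EReal.coe_add] at hlower
    have hS : vx + ∑ m, μ m * ((a • x + b • Q) m - x m) = a * vx + b * vQ := by
      rw [hsub3 x (a • x + b • Q), hdotz a b]
      linear_combination b * kq + ((∑ m, μ m * x m) - vx) * hab
    rw [hS] at hlower
    exact le_antisymm hupper hlower
  -- every point of the segment has a subgradient
  have hseg : segment ℝ x Q ⊆ {w | ∃ d, ESubgradAt V w d} := by
    rintro w ⟨a, b, ha, hb, hab, rfl⟩
    refine ⟨μ, ?_⟩
    intro w'
    rw [hval a b ha hb hab]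
    have base := hsubx w'
    rw [hvx] at base
    have hS : (a * vx + b * vQ) + ∑ m, μ m * (w' m - (a • x + b • Q) m)
        = vx + ∑ m, μ m * (w' m - x m) := by
      rw [hsub3 (a • x + b • Q) w', hsub3 x w', hdotz a b]
      linear_combination (-b) * kq + (vx - (∑ m, μ m * x m)) * hab
    calc ((a * vx + b * vQ : ℝ) : EReal) + ((∑ m, μ m * (w' m - (a • x + b • Q) m) : ℝ) : EReal)
        = (((a * vx + b * vQ) + ∑ m, μ m * (w' m - (a • x + b • Q) m) : ℝ) : EReal) :=
          (EReal.coe_add _ _).symm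
      _ = ((vx + ∑ m, μ m * (w' m - x m) : ℝ) : EReal) := by rw [hS]
      _ = ((vx : ℝ) : EReal) + ((∑ m, μ m * (w' m - x m) : ℝ) : EReal) := EReal.coe_add _ _
      _ ≤ V w' := base
  -- strict convexity contradiction
  have hfinal := hesc (segment ℝ x Q) hseg (convex_segment x Q)
    x (left_mem_segment ℝ x Q) Q (right_mem_segment ℝ x Q) hxQ
    (1/2) (1/2) one_half_pos one_half_pos (by norm_num)
  rw [hval (1/2) (1/2) (by norm_num) (by norm_num) (by norm_num), hvx, hvQ,
    ← EReal.coe_mul, ← EReal.coe_mul, ← EReal.coe_add, EReal.coe_lt_coe_iff] at hfinal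
  linarith
end
end

section
/- Let V(x) = Σ_{i=1}^n V_i(x_i) where each V_i : [0,1] → ℝ is strictly convex and continuous. Then the choice model q(μ) = argmax_{x ∈ Δ_{n−1}} { μᵀx − V(x) } is well-defined (the maximizer exists and is unique for every μ) and substitutable: for all i ≠ j, all μ ∈ ℝⁿ, and all t > 0, q_j(μ + t·e_i) ≤ q_j(μ). -/
open scoped BigOperators
open MeasureTheory

noncomputable section

/-!
Existence of the maximizer follows from compactness of the simplex, uniqueness from strict
concavity of the objective. For substitutability, let `x` and `x'` be the choices before and after
raising `μ i`, and suppose `x j < x' j`. Both sum to one, so `x' k < x k` for some `k`. Optimality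
of `x` rules out moving a small mass `ε` from `k` to `j`, optimality of `x'` rules out moving it
back; adding the two inequalities, the utilities contribute `(μ' k - μ k) ε ≥ 0`, while strict
convexity makes the increments of `V j` and `V k` over disjoint `ε`-intervals sum to a negative
number.
-/

open Set

section

variable {ι : Type*} [Fintype ι]

theorem strictConvexOn_sum_apply {s : ι → Set ℝ} {V : ι → ℝ → ℝ}
    (hV : ∀ i, StrictConvexOn ℝ (s i) (V i)) :
    StrictConvexOn ℝ (univ.pi s) fun x => ∑ i, V i (x i) := by
  refine ⟨convex_pi fun i _ => (hV i).1, fun x hx y hy hxy a b ha hb hab => ?_⟩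
  obtain ⟨i, hi⟩ := Function.ne_iff.mp hxy
  simp only [Pi.add_apply, Pi.smul_apply, smul_eq_mul, Finset.mul_sum, ← Finset.sum_add_distrib]
  refine Finset.sum_lt_sum (fun m _ => (hV m).convexOn.2 (hx m trivial) (hy m trivial)
    ha.le hb.le hab) ⟨i, Finset.mem_univ i, (hV i).2 (hx i trivial) (hy i trivial) hi ha hb hab⟩

theorem StrictConvexOn.sub_lt_sub_of_add_lt_sub {s : Set ℝ} {f : ℝ → ℝ}
    (hf : StrictConvexOn ℝ s f) {a b ε : ℝ} (ha : a ∈ s) (hb : b ∈ s) (hε : 0 < ε)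
    (hab : a + ε < b - ε) :
    f (a + ε) - f a < f b - f (b - ε) := by
  have hIcc : Icc a b ⊆ s := hf.1.ordConnected.out ha hb
  have hlo := hf.slope_strict_mono_adjacent ha (hIcc ⟨by linarith, by linarith⟩)
    (by linarith : a < a + ε) hab
  have hhi := hf.slope_strict_mono_adjacent (hIcc ⟨by linarith, by linarith⟩) hb hab
    (by linarith : b - ε < b)
  rw [add_sub_cancel_left] at hlo
  rw [sub_sub_cancel] at hhi
  exact (div_lt_div_iff_of_pos_right hε).1 (hlo.trans hhi)

theorem sum_apply_add_smul_single_sub_single [DecidableEq ι] (g : ι → ℝ → ℝ) (x : ι → ℝ)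
    {j k : ι} (hjk : j ≠ k) (ε : ℝ) :
    ∑ m, g m ((x + ε • (Pi.single j 1 - Pi.single k 1 : ι → ℝ)) m) =
      ∑ m, g m (x m) + (g j (x j + ε) - g j (x j)) + (g k (x k - ε) - g k (x k)) := by
  have h := Fintype.sum_eq_add
    (f := fun m => g m ((x + ε • (Pi.single j 1 - Pi.single k 1 : ι → ℝ)) m) - g m (x m))
    j k hjk fun m ⟨hmj, hmk⟩ => by simp [hmj, hmk]
  rw [Finset.sum_sub_distrib] at h
  simp [hjk, hjk.symm, ← sub_eq_add_neg] at h ⊢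
  linarith

theorem add_smul_single_sub_single_mem_stdSimplex [DecidableEq ι] {x : ι → ℝ}
    (hx : x ∈ stdSimplex ℝ ι) {j k : ι} (hjk : j ≠ k) {ε : ℝ} (hε : 0 ≤ ε) (hεk : ε ≤ x k) :
    x + ε • (Pi.single j 1 - Pi.single k 1 : ι → ℝ) ∈ stdSimplex ℝ ι := by
  refine ⟨fun m => ?_, ?_⟩
  · rcases eq_or_ne m j with rfl | hmj
    · simpa [hjk] using add_nonneg (hx.1 m) hε
    rcases eq_or_ne m k with rfl | hmk
    · simpa [hmj] using hεk
    simpa [hmj, hmk] using hx.1 m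
  · simpa [hx.2] using sum_apply_add_smul_single_sub_single (fun _ => id) x hjk ε

def surplus (μ : ι → ℝ) (V : ι → ℝ → ℝ) (x : ι → ℝ) : ℝ :=
  ∑ i, μ i * x i - ∑ i, V i (x i)

theorem strictConcaveOn_surplus (μ : ι → ℝ) {V : ι → ℝ → ℝ}
    (hV : ∀ i, StrictConvexOn ℝ (Icc 0 1) (V i)) :
    StrictConcaveOn ℝ (stdSimplex ℝ ι) (surplus μ V) := by
  have hsub : stdSimplex ℝ ι ⊆ univ.pi fun _ => Icc 0 1 :=
    fun x hx i _ => mem_Icc_of_mem_stdSimplex hx i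
  have hlin : ConcaveOn ℝ (stdSimplex ℝ ι) fun x => ∑ i, μ i * x i := by
    have h := (Fintype.linearCombination ℝ μ).concaveOn (convex_stdSimplex ℝ ι)
    rwa [show ⇑(Fintype.linearCombination ℝ μ) = fun x => ∑ i, μ i * x i from
      funext fun x => by simp [Fintype.linearCombination_apply, mul_comm]] at h
  exact hlin.sub_strictConvexOn ((strictConvexOn_sum_apply hV).subset hsub (convex_stdSimplex ℝ ι))

theorem existsUnique_isMaxOn_surplus [Nonempty ι] (μ : ι → ℝ) {V : ι → ℝ → ℝ}
    (hconv : ∀ i, StrictConvexOn ℝ (Icc 0 1) (V i)) (hcont : ∀ i, ContinuousOn (V i) (Icc 0 1)) :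
    ∃! x, x ∈ stdSimplex ℝ ι ∧ IsMaxOn (surplus μ V) (stdSimplex ℝ ι) x := by
  classical
  have hne : (stdSimplex ℝ ι).Nonempty :=
    ⟨Pi.single (Classical.arbitrary ι) 1, single_mem_stdSimplex ℝ _⟩
  have hcont' : ContinuousOn (surplus μ V) (stdSimplex ℝ ι) := by
    refine (Continuous.continuousOn (by fun_prop)).sub (continuousOn_finsetSum _ fun i _ => ?_)
    exact (hcont i).comp (continuous_apply i).continuousOn
      fun x hx => mem_Icc_of_mem_stdSimplex hx i
  obtain ⟨x, hx, hmax⟩ := (isCompact_stdSimplex ℝ ι).exists_isMaxOn hne hcont'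
  exact ⟨x, ⟨hx, hmax⟩, fun y ⟨hy, hymax⟩ =>
    (strictConcaveOn_surplus μ hconv).eq_of_isMaxOn hymax hmax hy hx⟩

theorem sub_mul_le_of_isMaxOn_surplus [DecidableEq ι] {μ : ι → ℝ} {V : ι → ℝ → ℝ}
    {x : ι → ℝ} (hx : x ∈ stdSimplex ℝ ι) (hmax : IsMaxOn (surplus μ V) (stdSimplex ℝ ι) x)
    {j k : ι} (hjk : j ≠ k) {ε : ℝ} (hε : 0 ≤ ε) (hεk : ε ≤ x k) :
    (μ j - μ k) * ε ≤ (V j (x j + ε) - V j (x j)) + (V k (x k - ε) - V k (x k)) := by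
  have h := isMaxOn_iff.1 hmax _ (add_smul_single_sub_single_mem_stdSimplex hx hjk hε hεk)
  simp only [surplus, sum_apply_add_smul_single_sub_single _ x hjk ε] at h
  linarith

theorem apply_le_apply_of_isMaxOn_surplus {V : ι → ℝ → ℝ}
    (hconv : ∀ i, StrictConvexOn ℝ (Icc 0 1) (V i)) {μ μ' x x' : ι → ℝ} {j : ι}
    (hμ : ∀ k, μ' j - μ j ≤ μ' k - μ k)
    (hx : x ∈ stdSimplex ℝ ι) (hmax : IsMaxOn (surplus μ V) (stdSimplex ℝ ι) x)
    (hx' : x' ∈ stdSimplex ℝ ι) (hmax' : IsMaxOn (surplus μ' V) (stdSimplex ℝ ι) x') :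
    x' j ≤ x j := by
  classical
  by_contra! hj
  obtain ⟨k, hk⟩ : ∃ k, x' k < x k := by
    by_contra! h
    have := Finset.sum_lt_sum (fun m _ => h m) ⟨j, Finset.mem_univ j, hj⟩
    rw [hx.2, hx'.2] at this
    exact this.false
  have hkj : k ≠ j := by rintro rfl; linarith
  obtain ⟨ε, hε, hεj, hεk⟩ : ∃ ε > 0, 2 * ε < x' j - x j ∧ 2 * ε < x k - x' k :=
    ⟨min (x' j - x j) (x k - x' k) / 3, by positivity,
      by linarith [min_le_left (x' j - x j) (x k - x' k)],
      by linarith [min_le_right (x' j - x j) (x k - x' k)]⟩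
  have hgain := sub_mul_le_of_isMaxOn_surplus hx hmax hkj.symm hε.le (by linarith [hx'.1 k])
  have hgain' := sub_mul_le_of_isMaxOn_surplus hx' hmax' hkj hε.le (by linarith [hx.1 j])
  have hVj := (hconv j).sub_lt_sub_of_add_lt_sub (mem_Icc_of_mem_stdSimplex hx j)
    (mem_Icc_of_mem_stdSimplex hx' j) hε (by linarith)
  have hVk := (hconv k).sub_lt_sub_of_add_lt_sub (mem_Icc_of_mem_stdSimplex hx' k)
    (mem_Icc_of_mem_stdSimplex hx k) hε (by linarith)
  linarith [mul_le_mul_of_nonneg_right (hμ k) hε.le]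

end

theorem stmt_16 (n : ℕ) (hn : 1 ≤ n) (V : Fin n → ℝ → ℝ)
    (hconv : ∀ i, StrictConvexOn ℝ (Set.Icc (0 : ℝ) 1) (V i))
    (hcont : ∀ i, ContinuousOn (V i) (Set.Icc (0 : ℝ) 1)) :
    (∀ μ : Fin n → ℝ, ∃! x : Fin n → ℝ, x ∈ choiceSimplex n ∧
      ∀ y ∈ choiceSimplex n,
        ∑ i, μ i * y i - ∑ i, V i (y i) ≤ ∑ i, μ i * x i - ∑ i, V i (x i)) ∧
    (∀ q : (Fin n → ℝ) → Fin n → ℝ,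
      (∀ μ : Fin n → ℝ, q μ ∈ choiceSimplex n ∧
        ∀ y ∈ choiceSimplex n,
          ∑ i, μ i * y i - ∑ i, V i (y i) ≤ ∑ i, μ i * q μ i - ∑ i, V i (q μ i)) →
      ∀ i j : Fin n, i ≠ j → ∀ (μ : Fin n → ℝ) (t : ℝ), 0 < t →
        q (μ + t • (Pi.single i 1 : Fin n → ℝ)) j ≤ q μ j) := by
  have : Nonempty (Fin n) := ⟨⟨0, hn⟩⟩
  -- `choiceSimplex n` is `stdSimplex ℝ (Fin n)` and the maximality clauses unfold `IsMaxOn`.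
  refine ⟨fun μ => existsUnique_isMaxOn_surplus μ hconv hcont, fun q hq i j hij μ t ht => ?_⟩
  refine apply_le_apply_of_isMaxOn_surplus hconv (fun k => ?_) (hq μ).1 (isMaxOn_iff.2 (hq μ).2)
    (hq _).1 (isMaxOn_iff.2 (hq _).2)
  rcases eq_or_ne k i with rfl | hki
  · simp [hij.symm, ht.le]
  · simp [hij.symm, hki]
end
end

section
/- Let A be a symmetric positive definite n×n real matrix and let V(x) = xᵀAx. For each i ∈ {1,…,n}, define V̄_i : ℝ^{n−1} → ℝ ∪ {+∞} by V̄_i(z) = V(z₁,…,z_{i−1}, 1 − Σ_{j=1}^{n−1} z_j, z_i,…,z_{n−1}) if z ≥ 0 and Σ_j z_j ≤ 1, and V̄_i(z) = +∞ otherwise. Then V̄_i is supermodular for every i ∈ {1,…,n} if and only if A_{jk} − A_{ik} − A_{ij} + A_{ii} ≥ 0 for all distinct i, j, k ∈ {1,…,n}, where A_{ij} denotes the (i,j)-th entry of A. -/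
open scoped BigOperators
open MeasureTheory

noncomputable section

/-- The quadratic form V(x) = xᵀ A x. -/
def Vquad {n : ℕ} (A : Matrix (Fin n) (Fin n) ℝ) (x : Fin n → ℝ) : ℝ :=
  ∑ i, ∑ j, x i * A i j * x j

/-- V̄ᵢ(z) = V(z₁,…,z_{i−1}, 1 − Σⱼ zⱼ, z_i,…,z_{n−1}) on the feasible region, +∞ outside. -/
def VbarR {n : ℕ} (V : (Fin (n + 1) → ℝ) → ℝ) (i : Fin (n + 1))
    (z : Fin n → ℝ) : EReal :=
  if (∀ j, 0 ≤ z j) ∧ ∑ j, z j ≤ 1 then ((V (i.insertNth (1 - ∑ j, z j) z) : ℝ) : EReal)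
  else ⊤

namespace Stmt17Aux
variable {n : ℕ}

def Fb (A : Matrix (Fin (n+1)) (Fin (n+1)) ℝ) (x y : Fin (n+1) → ℝ) : ℝ :=
  ∑ a, ∑ b, x a * A a b * y b

def Dv (i : Fin (n+1)) (u : Fin n → ℝ) : Fin (n+1) → ℝ := i.insertNth (-∑ j, u j) u

lemma quad_key (A : Matrix (Fin (n+1)) (Fin (n+1)) ℝ) (X U V : Fin (n+1) → ℝ) :
    Vquad A (X + U + V) + Vquad A X =
    Vquad A (X + U) + Vquad A (X + V) + (Fb A U V + Fb A V U) := by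
  simp only [Vquad, Fb, Pi.add_apply, ← Finset.sum_add_distrib]
  exact Finset.sum_congr rfl fun a _ => Finset.sum_congr rfl fun b _ => by ring

lemma m_add (i : Fin (n+1)) (a u : Fin n → ℝ) :
    i.insertNth (1 - ∑ j, (a + u) j) (a + u) =
    i.insertNth (1 - ∑ j, a j) a + Dv i u := by
  have hs : (1 - ∑ j, (a + u) j) = (1 - ∑ j, a j) + (-∑ j, u j) := by
    simp [Finset.sum_add_distrib]; ring
  rw [Dv, hs, Fin.insertNth_add]

lemma Fb_Dv (A : Matrix (Fin (n+1)) (Fin (n+1)) ℝ) (i : Fin (n+1)) (u v : Fin n → ℝ) :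
    Fb A (Dv i u) (Dv i v) =
    ∑ p, ∑ q, u p * v q *
      (A (i.succAbove p) (i.succAbove q) - A i (i.succAbove q)
        - A (i.succAbove p) i + A i i) := by
  rw [Fb]
  rw [Fin.sum_univ_succAbove _ i]
  simp_rw [Fin.sum_univ_succAbove _ i]
  simp only [Dv, Fin.insertNth_apply_same, Fin.insertNth_apply_succAbove]
  have hrhs : (∑ p, ∑ q, u p * v q *
      (A (i.succAbove p) (i.succAbove q) - A i (i.succAbove q)
        - A (i.succAbove p) i + A i i))
      = ((∑ p, ∑ q, u p * v q * A (i.succAbove p) (i.succAbove q))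
        - (∑ p, ∑ q, u p * v q * A i (i.succAbove q)))
        - (∑ p, ∑ q, u p * v q * A (i.succAbove p) i)
        + (∑ p, ∑ q, u p * v q * A i i) := by
    simp only [mul_sub, mul_add, Finset.sum_sub_distrib, Finset.sum_add_distrib]
  rw [hrhs]
  have h1 : (-∑ j : Fin n, u j) * A i i * -∑ j : Fin n, v j
      = ∑ p, ∑ q, u p * v q * A i i := by
    calc (-∑ j : Fin n, u j) * A i i * -∑ j : Fin n, v j
        = ((∑ j : Fin n, u j) * ∑ j : Fin n, v j) * A i i := by ring
      _ = (∑ p, ∑ q, u p * v q) * A i i := by rw [Finset.sum_mul_sum]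
      _ = ∑ p, ∑ q, u p * v q * A i i := by simp only [Finset.sum_mul]
  have h2 : (∑ x : Fin n, (-∑ j : Fin n, u j) * A i (i.succAbove x) * v x)
      = -∑ p, ∑ q, u p * v q * A i (i.succAbove q) := by
    calc (∑ x : Fin n, (-∑ j : Fin n, u j) * A i (i.succAbove x) * v x)
        = ∑ x : Fin n, ∑ j : Fin n, -(u j * v x * A i (i.succAbove x)) := by
          refine Finset.sum_congr rfl fun x _ => ?_
          rw [show (-∑ j : Fin n, u j) * A i (i.succAbove x) * v x
              = (∑ j : Fin n, u j) * (-(v x * A i (i.succAbove x))) from by ring,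
            Finset.sum_mul]
          exact Finset.sum_congr rfl fun j _ => by ring
      _ = ∑ j : Fin n, ∑ x : Fin n, -(u j * v x * A i (i.succAbove x)) := Finset.sum_comm
      _ = -∑ p, ∑ q, u p * v q * A i (i.succAbove q) := by
          simp [Finset.sum_neg_distrib]
  have h3 : (∑ x : Fin n, (u x * A (i.succAbove x) i * -∑ j : Fin n, v j +
        ∑ q : Fin n, u x * A (i.succAbove x) (i.succAbove q) * v q))
      = (∑ p, ∑ q, u p * v q * A (i.succAbove p) (i.succAbove q))
        - ∑ p, ∑ q, u p * v q * A (i.succAbove p) i := by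
    rw [← Finset.sum_sub_distrib]
    refine Finset.sum_congr rfl fun x _ => ?_
    have hx : u x * A (i.succAbove x) i * -∑ j : Fin n, v j
        = -∑ q : Fin n, u x * v q * A (i.succAbove x) i := by
      rw [show u x * A (i.succAbove x) i * -∑ j : Fin n, v j
          = (∑ j : Fin n, v j) * (-(u x * A (i.succAbove x) i)) from by ring,
        Finset.sum_mul, ← Finset.sum_neg_distrib]
      exact Finset.sum_congr rfl fun j _ => by ring
    have he : ∑ q : Fin n, u x * A (i.succAbove x) (i.succAbove q) * v q
        = ∑ q : Fin n, u x * v q * A (i.succAbove x) (i.succAbove q) :=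
      Finset.sum_congr rfl fun q _ => by ring
    rw [hx, he]
    ring
  rw [h1, h2, h3]
  ring

lemma g_key (A : Matrix (Fin (n+1)) (Fin (n+1)) ℝ) (i : Fin (n+1)) (a u v : Fin n → ℝ) :
    Vquad A (i.insertNth (1 - ∑ j, (a + u + v) j) (a + u + v))
      + Vquad A (i.insertNth (1 - ∑ j, a j) a)
    = Vquad A (i.insertNth (1 - ∑ j, (a + u) j) (a + u))
      + Vquad A (i.insertNth (1 - ∑ j, (a + v) j) (a + v))
      + (Fb A (Dv i u) (Dv i v) + Fb A (Dv i v) (Dv i u)) := by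
  rw [m_add i (a + u) v, m_add i a u, m_add i a v]
  exact quad_key A _ _ _

lemma decomp₁ (z₁ z₂ : Fin n → ℝ) : z₁ ⊓ z₂ + (z₁ ⊔ z₂ - z₂) = z₁ := by
  funext t
  simp only [Pi.add_apply, Pi.sub_apply, Pi.inf_apply, Pi.sup_apply]
  rcases le_total (z₁ t) (z₂ t) with h | h
  · rw [sup_eq_right.2 h, inf_eq_left.2 h]; ring
  · rw [sup_eq_left.2 h, inf_eq_right.2 h]; ring

lemma decomp₂ (z₁ z₂ : Fin n → ℝ) : z₁ ⊓ z₂ + (z₁ ⊔ z₂ - z₁) = z₂ := by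
  rw [inf_comm, sup_comm]; exact decomp₁ z₂ z₁

lemma decomp₃ (z₁ z₂ : Fin n → ℝ) :
    z₁ ⊓ z₂ + (z₁ ⊔ z₂ - z₁) + (z₁ ⊔ z₂ - z₂) = z₁ ⊔ z₂ := by
  funext t
  simp only [Pi.add_apply, Pi.sub_apply, Pi.inf_apply, Pi.sup_apply]
  rcases le_total (z₁ t) (z₂ t) with h | h
  · rw [sup_eq_right.2 h, inf_eq_left.2 h]; ring
  · rw [sup_eq_left.2 h, inf_eq_right.2 h]; ring

lemma sup_inf_key (A : Matrix (Fin (n+1)) (Fin (n+1)) ℝ) (i : Fin (n+1)) (z₁ z₂ : Fin n → ℝ) :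
    Vquad A (i.insertNth (1 - ∑ j, (z₁ ⊔ z₂) j) (z₁ ⊔ z₂))
      + Vquad A (i.insertNth (1 - ∑ j, (z₁ ⊓ z₂) j) (z₁ ⊓ z₂))
    = Vquad A (i.insertNth (1 - ∑ j, z₁ j) z₁)
      + Vquad A (i.insertNth (1 - ∑ j, z₂ j) z₂)
      + (Fb A (Dv i (z₁ ⊔ z₂ - z₁)) (Dv i (z₁ ⊔ z₂ - z₂))
        + Fb A (Dv i (z₁ ⊔ z₂ - z₂)) (Dv i (z₁ ⊔ z₂ - z₁))) := by
  have H := g_key A i (z₁ ⊓ z₂) (z₁ ⊔ z₂ - z₁) (z₁ ⊔ z₂ - z₂)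
  rw [decomp₃ z₁ z₂, decomp₂ z₁ z₂, decomp₁ z₁ z₂] at H
  rw [H]
  ring

lemma Fb_nonneg (A : Matrix (Fin (n+1)) (Fin (n+1)) ℝ) (hsymm : A.IsSymm)
    (hA : ∀ i j k : Fin (n + 1), i ≠ j → j ≠ k → i ≠ k →
      0 ≤ A j k - A i k - A i j + A i i)
    (i : Fin (n+1)) (u v : Fin n → ℝ) (hu : ∀ t, 0 ≤ u t) (hv : ∀ t, 0 ≤ v t)
    (hd : ∀ t, u t * v t = 0) :
    0 ≤ Fb A (Dv i u) (Dv i v) := by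
  rw [Fb_Dv]
  refine Finset.sum_nonneg fun p _ => Finset.sum_nonneg fun q _ => ?_
  rcases eq_or_ne p q with rfl | hpq
  · simp [hd p]
  · refine mul_nonneg (mul_nonneg (hu p) (hv q)) ?_
    have h1 : i ≠ i.succAbove p := Fin.ne_succAbove i p
    have h2 : i ≠ i.succAbove q := Fin.ne_succAbove i q
    have h3 : i.succAbove p ≠ i.succAbove q := fun e => hpq (Fin.succAbove_right_injective e)
    have := hA i (i.succAbove p) (i.succAbove q) h1 h3 h2
    rw [hsymm.apply i (i.succAbove p)]
    linarith

lemma VbarR_ne_bot {V : (Fin (n + 1) → ℝ) → ℝ} {i : Fin (n + 1)} {z : Fin n → ℝ} :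
    VbarR V i z ≠ ⊥ := by
  rw [VbarR]; split <;> simp

end Stmt17Aux

open Stmt17Aux

theorem stmt_17 (n : ℕ) (A : Matrix (Fin (n + 1)) (Fin (n + 1)) ℝ)
    (hsymm : A.IsSymm) (hpos : A.PosDef) :
    (∀ i : Fin (n + 1), ∀ z₁ z₂ : Fin n → ℝ,
      VbarR (Vquad A) i z₁ + VbarR (Vquad A) i z₂ ≤
        VbarR (Vquad A) i (z₁ ⊔ z₂) + VbarR (Vquad A) i (z₁ ⊓ z₂)) ↔
    (∀ i j k : Fin (n + 1), i ≠ j → j ≠ k → i ≠ k →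
      0 ≤ A j k - A i k - A i j + A i i) := by
  constructor
  · intro h i j k hij hjk hik
    obtain ⟨p, hp⟩ := Fin.exists_succAbove_eq (Ne.symm hij)
    obtain ⟨q, hq⟩ := Fin.exists_succAbove_eq (Ne.symm hik)
    have hpq : p ≠ q := fun e => hjk (by rw [← hp, ← hq, e])
    have hsum1 : ∑ t, (Pi.single p (1/2 : ℝ) : Fin n → ℝ) t = 1/2 := by
      simp [Finset.sum_pi_single']
    have hsum2 : ∑ t, (Pi.single q (1/2 : ℝ) : Fin n → ℝ) t = 1/2 := by
      simp [Finset.sum_pi_single']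
    have hnn : ∀ (a : Fin n), ∀ t, (0:ℝ) ≤ (Pi.single a (1/2 : ℝ) : Fin n → ℝ) t := by
      intro a t
      rw [Pi.single_apply]
      split <;> norm_num
    have hsup : (Pi.single p (1/2 : ℝ) : Fin n → ℝ) ⊔ (Pi.single q (1/2 : ℝ) : Fin n → ℝ)
        = (Pi.single p (1/2 : ℝ) : Fin n → ℝ) + (Pi.single q (1/2 : ℝ) : Fin n → ℝ) := by
      funext t
      simp only [Pi.sup_apply, Pi.add_apply, Pi.single_apply]
      split_ifs with h1 h2 h2
      · exact absurd (h1.symm.trans h2) hpq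
      all_goals norm_num
    have hinf : (Pi.single p (1/2 : ℝ) : Fin n → ℝ) ⊓ (Pi.single q (1/2 : ℝ) : Fin n → ℝ) = 0 := by
      funext t
      simp only [Pi.inf_apply, Pi.zero_apply, Pi.single_apply]
      split_ifs with h1 h2 h2
      · exact absurd (h1.symm.trans h2) hpq
      all_goals norm_num
    have H := h i ((Pi.single p (1/2 : ℝ) : Fin n → ℝ)) ((Pi.single q (1/2 : ℝ) : Fin n → ℝ))
    rw [hsup, hinf] at H
    have hP1 : (∀ t, 0 ≤ (Pi.single p (1/2 : ℝ) : Fin n → ℝ) t) ∧ ∑ t, (Pi.single p (1/2 : ℝ) : Fin n → ℝ) t ≤ 1 :=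
      ⟨hnn p, by rw [hsum1]; norm_num⟩
    have hP2 : (∀ t, 0 ≤ (Pi.single q (1/2 : ℝ) : Fin n → ℝ) t) ∧ ∑ t, (Pi.single q (1/2 : ℝ) : Fin n → ℝ) t ≤ 1 :=
      ⟨hnn q, by rw [hsum2]; norm_num⟩
    have hPs : (∀ t, 0 ≤ ((Pi.single p (1/2 : ℝ) : Fin n → ℝ) + (Pi.single q (1/2 : ℝ) : Fin n → ℝ)) t) ∧
        ∑ t, ((Pi.single p (1/2 : ℝ) : Fin n → ℝ) + (Pi.single q (1/2 : ℝ) : Fin n → ℝ)) t ≤ 1 := by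
      constructor
      · intro t; exact add_nonneg (hnn p t) (hnn q t)
      · simp only [Pi.add_apply, Finset.sum_add_distrib, hsum1, hsum2]; norm_num
    have hP0 : (∀ t, 0 ≤ (0 : Fin n → ℝ) t) ∧ ∑ t, (0 : Fin n → ℝ) t ≤ 1 := by
      constructor
      · intro t; exact le_refl 0
      · simp
    simp only [VbarR] at H
    rw [if_pos hP1, if_pos hP2, if_pos hPs, if_pos hP0, ← EReal.coe_add, ← EReal.coe_add,
      EReal.coe_le_coe_iff] at H
    have key := sup_inf_key A i ((Pi.single p (1/2 : ℝ) : Fin n → ℝ)) ((Pi.single q (1/2 : ℝ) : Fin n → ℝ))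
    rw [hsup, hinf, add_sub_cancel_left, add_sub_cancel_right, Fb_Dv, Fb_Dv] at key
    have hss : ∀ (a b : Fin n) (c d : ℝ),
        (∑ p', ∑ q', (Pi.single a c : Fin n → ℝ) p' * (Pi.single b d : Fin n → ℝ) q' *
          (A (i.succAbove p') (i.succAbove q') - A i (i.succAbove q')
            - A (i.succAbove p') i + A i i))
        = c * d * (A (i.succAbove a) (i.succAbove b) - A i (i.succAbove b)
            - A (i.succAbove a) i + A i i) := by
      intro a b c d
      simp [Pi.single_apply, ite_mul, zero_mul, mul_ite, mul_zero, Finset.sum_ite_eq,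
        Finset.sum_ite_eq', mul_assoc]
    rw [hss q p, hss p q, hp, hq] at key
    rw [hsymm.apply j k, hsymm.apply i j, hsymm.apply i k] at key
    linarith
  · intro hA i z₁ z₂
    by_cases hm : (∀ t, 0 ≤ (z₁ ⊓ z₂) t) ∧ ∑ t, (z₁ ⊓ z₂) t ≤ 1
    · by_cases hs : (∀ t, 0 ≤ (z₁ ⊔ z₂) t) ∧ ∑ t, (z₁ ⊔ z₂) t ≤ 1
      · have hP1 : (∀ t, 0 ≤ z₁ t) ∧ ∑ t, z₁ t ≤ 1 := by
          constructor
          · intro t; exact (hm.1 t).trans inf_le_left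
          · exact le_trans (Finset.sum_le_sum fun t _ => (le_sup_left : z₁ t ≤ _)) hs.2
        have hP2 : (∀ t, 0 ≤ z₂ t) ∧ ∑ t, z₂ t ≤ 1 := by
          constructor
          · intro t; exact (hm.1 t).trans inf_le_right
          · exact le_trans (Finset.sum_le_sum fun t _ => (le_sup_right : z₂ t ≤ _)) hs.2
        simp only [VbarR]
        rw [if_pos hP1, if_pos hP2, if_pos hs, if_pos hm, ← EReal.coe_add, ← EReal.coe_add,
          EReal.coe_le_coe_iff]
        have key := sup_inf_key A i z₁ z₂
        have hu : ∀ t, 0 ≤ (z₁ ⊔ z₂ - z₁) t := by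
          intro t
          simp only [Pi.sub_apply, Pi.sup_apply, sub_nonneg]
          exact le_sup_left
        have hv : ∀ t, 0 ≤ (z₁ ⊔ z₂ - z₂) t := by
          intro t
          simp only [Pi.sub_apply, Pi.sup_apply, sub_nonneg]
          exact le_sup_right
        have hd : ∀ t, (z₁ ⊔ z₂ - z₁) t * (z₁ ⊔ z₂ - z₂) t = 0 := by
          intro t
          simp only [Pi.sub_apply, Pi.sup_apply]
          rcases le_total (z₁ t) (z₂ t) with h' | h'
          · rw [sup_eq_right.2 h', sub_self, mul_zero]
          · rw [sup_eq_left.2 h', sub_self, zero_mul]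
        have hd' : ∀ t, (z₁ ⊔ z₂ - z₂) t * (z₁ ⊔ z₂ - z₁) t = 0 := fun t =>
          (mul_comm _ _).trans (hd t)
        have n1 := Fb_nonneg A hsymm hA i _ _ hu hv hd
        have n2 := Fb_nonneg A hsymm hA i _ _ hv hu hd'
        linarith
      · simp only [VbarR]
        rw [if_neg hs, EReal.top_add_of_ne_bot (by split <;> simp)]
        exact le_top
    · simp only [VbarR]
      rw [if_neg hm, EReal.add_top_of_ne_bot (by split <;> simp)]
      exact le_top
end
end
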